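/- arXiv:1604.08841 — 7 statements merged into one kernel-verified Lean document; each statement's English description precedes it below -/
import Mathlib

section
/- A closed set A in ℝ^d has reach equal to infinity if and only if A is convex (and closed). -/
open Metric Set Filter
open scoped ENNReal RealInnerProductSpace Topology NNReal

noncomputable section

variable {E : Type*} [NormedAddCommGroup E] [InnerProductSpace ℝ E]

/-- `x` has a unique nearest point in `A`. -/
def UnpPt (A : Set E) (x : E) : Prop :=
  ∃! a, a ∈ A ∧ dist x a = Metric.infDist x A

/-- The reach of `A` at a point `a` (Federer). -/
def locReach (A : Set E) (a : E) : ℝ≥0∞ :=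
  ⨆ (r : ℝ≥0) (_ : ∀ x : E, dist x a < (r : ℝ) → UnpPt A x), (r : ℝ≥0∞)

/-- The (global) reach of `A`. -/
def setReach (A : Set E) : ℝ≥0∞ := ⨅ a ∈ A, locReach A a

/-- The tangent cone of `A` at `a` in the sense of Federer. -/
def Tan (A : Set E) (a : E) : Set E :=
  {u | u = 0 ∨ ∃ (x : ℕ → E) (r : ℕ → ℝ),
    (∀ i, x i ∈ A ∧ x i ≠ a ∧ 0 < r i) ∧
    Tendsto x atTop (nhds a) ∧
    Tendsto (fun i => r i • (x i - a)) atTop (nhds u)}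

/-- The normal cone of `A` at `a`: the dual cone of the tangent cone. -/
def Nor (A : Set E) (a : E) : Set E :=
  {u | ∀ v ∈ Tan A a, ⟪u, v⟫ ≤ 0}

/-! Infinite reach means that every point has a unique nearest point. In a strictly convex
space a convex set has at most one nearest point to a given point, and in a proper space a
closed set has at least one.

Conversely (Motzkin), `φ = normSqSubInfDistSq A` is the supremum over `c ∈ A` of the affine
functions `x ↦ 2⟪x, c⟫ - ‖c‖²`, attained exactly at the nearest points, so `2 P z` is a
subgradient of `φ` at `z` for the nearest-point map `P`. If `y = s a + t b ∉ A` with `a, b ∈ A`,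
then `F = φ - 2⟪·, y⟫` is bounded below, and a weak Ekeland principle gives `x₀` with
`F x₀ ≤ F z + δ ‖z - x₀‖`, where `δ = infDist y A`. Moving from `x₀` in the direction
`y - P x₀` and using continuity of `P` at `x₀` gives `2 ‖y - P x₀‖² ≤ δ ‖y - P x₀‖`, which
contradicts `0 < δ ≤ ‖y - P x₀‖`. -/

lemma locReach_eq_top_iff {V : Type*} [NormedAddCommGroup V] {A : Set V} {a : V} :
    locReach A a = ⊤ ↔ ∀ x, UnpPt A x := by
  constructor
  · intro h x
    have hlt : (nndist x a : ℝ≥0∞) < locReach A a := h ▸ ENNReal.coe_lt_top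
    obtain ⟨r, hr⟩ := lt_iSup_iff.1 hlt
    by_cases hr_reach : ∀ x : V, dist x a < (r : ℝ) → UnpPt A x
    · rw [iSup_pos hr_reach, ENNReal.coe_lt_coe] at hr
      exact hr_reach x hr
    · rw [iSup_neg hr_reach] at hr
      exact absurd hr ENNReal.not_lt_zero
  · intro h
    rw [locReach, iSup_congr fun r => iSup_pos fun x _ => h x, ENNReal.iSup_coe_eq_top]
    simp

lemma setReach_eq_top_iff {V : Type*} [NormedAddCommGroup V] {A : Set V} (hA : A.Nonempty) :
    setReach A = ⊤ ↔ ∀ x, UnpPt A x := by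
  simp only [setReach, iInf_eq_top, locReach_eq_top_iff]
  exact ⟨fun h => h _ hA.some_mem, fun h _ _ => h⟩

section Metric

variable {X : Type*} [MetricSpace X] {A : Set X}

lemma isClosed_of_forall_exists_dist_eq_infDist
    (h : ∀ x, ∃ a ∈ A, dist x a = infDist x A) : IsClosed A := by
  refine isClosed_of_closure_subset fun y hy => ?_
  obtain ⟨a, ha, hd⟩ := h y
  rw [(mem_closure_iff_infDist_zero ⟨a, ha⟩).1 hy, dist_eq_zero] at hd
  exact hd ▸ ha

lemma eventually_dist_le_infDist_add {P : X → X} (hP : ∀ z, dist z (P z) = infDist z A)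
    (x : X) {η : ℝ} (hη : 0 < η) : ∀ᶠ z in 𝓝 x, dist x (P z) ≤ infDist x A + η := by
  filter_upwards [ball_mem_nhds x (half_pos hη)] with z hz
  rw [mem_ball] at hz
  calc dist x (P z) ≤ dist x z + dist z (P z) := dist_triangle _ _ _
    _ ≤ dist z x + (infDist x A + dist z x) := by
      rw [hP, dist_comm x z]; gcongr; exact infDist_le_infDist_add_dist
    _ ≤ infDist x A + η := by linarith

lemma tendsto_of_dist_eq_infDist [ProperSpace X] (hA : IsClosed A) {P : X → X}
    (hPA : ∀ z, P z ∈ A) (hP : ∀ z, dist z (P z) = infDist z A) {x p : X}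
    (hp : ∀ q ∈ A, dist x q = infDist x A → q = p) : Tendsto P (𝓝 x) (𝓝 p) := by
  refine (isCompact_closedBall x (infDist x A + 1)).tendsto_nhds_of_unique_mapClusterPt
    ((eventually_dist_le_infDist_add hP x one_pos).mono fun z hz => mem_closedBall'.2 hz)
    fun q _ hq => hp q (hA.mem_of_mapClusterPt hq (Eventually.of_forall hPA)) ?_
  refine le_antisymm (le_of_forall_pos_le_add fun η hη => ?_)
    (infDist_le_dist_of_mem (hA.mem_of_mapClusterPt hq (Eventually.of_forall hPA)))
  exact mem_closedBall'.1 (isClosed_closedBall.mem_of_mapClusterPt hq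
    ((eventually_dist_le_infDist_add hP x hη).mono fun z hz => mem_closedBall'.2 hz))

/-- A weak form of Ekeland's variational principle, valid in proper spaces. -/
lemma Continuous.exists_forall_le_add_mul_dist [ProperSpace X] [Nonempty X] {F : X → ℝ}
    (hF : Continuous F) (hbdd : BddBelow (range F)) {ε : ℝ} (hε : 0 < ε) :
    ∃ x₀, ∀ z, F x₀ ≤ F z + ε * dist z x₀ := by
  obtain ⟨m, hm⟩ := hbdd
  obtain ⟨y⟩ := ‹Nonempty X›
  have hcoercive : Tendsto (fun z => F z + ε * dist z y) (cocompact X) atTop :=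
    tendsto_atTop_add_left_of_le _ m (fun z => hm ⟨z, rfl⟩)
      ((tendsto_dist_right_cocompact_atTop y).const_mul_atTop hε)
  have hG : Continuous fun z => F z + ε * dist z y := by fun_prop
  obtain ⟨x₀, hx₀⟩ := hG.exists_forall_le hcoercive
  refine ⟨x₀, fun z => ?_⟩
  have hmin : F x₀ + ε * dist x₀ y ≤ F z + ε * dist z y := hx₀ z
  have htri : ε * dist z y ≤ ε * (dist z x₀ + dist x₀ y) := by gcongr; exact dist_triangle _ _ _
  linarith

end Metric

lemma Convex.eq_of_dist_eq_infDist {V : Type*} [NormedAddCommGroup V] [NormedSpace ℝ V]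
    [StrictConvexSpace ℝ V] {A : Set V} (hA : Convex ℝ A) {x b c : V} (hb : b ∈ A) (hc : c ∈ A)
    (hxb : dist x b = infDist x A) (hxc : dist x c = infDist x A) : b = c := by
  by_contra hne
  have hmid : (1 / 2 : ℝ) • b + (1 / 2 : ℝ) • c ∈ A :=
    hA hb hc (by norm_num) (by norm_num) (by norm_num)
  have hnorm : ‖x - b‖ = ‖x - c‖ := by rw [← dist_eq_norm, ← dist_eq_norm, hxb, hxc]
  have hlt := (norm_midpoint_lt_iff hnorm).2 fun h => hne (sub_right_injective h)
  have hle := infDist_le_dist_of_mem (x := x) hmid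
  rw [← dist_eq_norm x b, hxb] at hlt
  have : x - ((1 / 2 : ℝ) • b + (1 / 2 : ℝ) • c) = (1 / 2 : ℝ) • (x - b + (x - c)) := by module
  rw [dist_eq_norm, this] at hle
  linarith

lemma Convex.unpPt {V : Type*} [NormedAddCommGroup V] [NormedSpace ℝ V] [StrictConvexSpace ℝ V]
    [ProperSpace V] {A : Set V} (hA : Convex ℝ A) (hne : A.Nonempty) (hclosed : IsClosed A)
    (x : V) : UnpPt A x := by
  obtain ⟨c, hc, hcd⟩ := hclosed.exists_infDist_eq_dist hne x
  exact ⟨c, ⟨hc, hcd.symm⟩, fun b hb => hA.eq_of_dist_eq_infDist hb.1 hc hb.2 hcd.symm⟩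

def normSqSubInfDistSq {V : Type*} [SeminormedAddCommGroup V] (A : Set V) (x : V) : ℝ :=
  ‖x‖ ^ 2 - infDist x A ^ 2

lemma continuous_normSqSubInfDistSq {V : Type*} [SeminormedAddCommGroup V] (A : Set V) :
    Continuous (normSqSubInfDistSq A) := by
  have := continuous_infDist_pt (s := A)
  unfold normSqSubInfDistSq
  fun_prop

lemma two_inner_sub_norm_sq_le_normSqSubInfDistSq {A : Set E} {c : E} (hc : c ∈ A) (x : E) :
    2 * ⟪x, c⟫ - ‖c‖ ^ 2 ≤ normSqSubInfDistSq A x := by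
  have hd : infDist x A ^ 2 ≤ dist x c ^ 2 := by
    gcongr
    · exact infDist_nonneg
    · exact infDist_le_dist_of_mem hc
  rw [dist_eq_norm, norm_sub_sq_real] at hd
  rw [normSqSubInfDistSq]
  linarith

lemma normSqSubInfDistSq_sub_le {A : Set E} {c z : E} (hc : c ∈ A)
    (hd : dist z c = infDist z A) (x : E) :
    normSqSubInfDistSq A z - normSqSubInfDistSq A x ≤ 2 * ⟪z - x, c⟫ := by
  have hx := two_inner_sub_norm_sq_le_normSqSubInfDistSq hc x
  have hz : normSqSubInfDistSq A z = 2 * ⟪z, c⟫ - ‖c‖ ^ 2 := by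
    rw [normSqSubInfDistSq, ← hd, dist_eq_norm, norm_sub_sq_real]
    ring
  rw [hz, inner_sub_left]
  linarith

lemma two_mul_norm_sq_le_of_forall_le_add_mul_dist [ProperSpace E] {A : Set E}
    (hclosed : IsClosed A) {P : E → E} (hPA : ∀ z, P z ∈ A)
    (hPd : ∀ z, dist z (P z) = infDist z A) {x₀ y : E}
    (hPu : ∀ q ∈ A, dist x₀ q = infDist x₀ A → q = P x₀) {ε : ℝ}
    (hx₀ : ∀ z, normSqSubInfDistSq A x₀ - 2 * ⟪x₀, y⟫ ≤
      normSqSubInfDistSq A z - 2 * ⟪z, y⟫ + ε * dist z x₀) :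
    2 * ‖y - P x₀‖ ^ 2 ≤ ε * ‖y - P x₀‖ := by
  set p := P x₀
  set z : ℝ → E := fun τ => x₀ + τ • (y - p)
  have hbound : ∀ τ : ℝ, 0 < τ → -(ε * ‖y - p‖) ≤ 2 * ⟪y - p, P (z τ) - y⟫ := by
    intro τ hτ
    have h₁ := hx₀ (z τ)
    have h₂ := normSqSubInfDistSq_sub_le (hPA (z τ)) (hPd (z τ)) x₀
    simp only [z] at h₁ h₂ ⊢
    rw [dist_eq_norm, add_sub_cancel_left, norm_smul, Real.norm_of_nonneg hτ.le, inner_add_left,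
      real_inner_smul_left] at h₁
    rw [add_sub_cancel_left, real_inner_smul_left] at h₂
    rw [inner_sub_right]
    refine le_of_mul_le_mul_left ?_ hτ
    linarith
  have hlim : Tendsto (fun τ => 2 * ⟪y - p, P (z τ) - y⟫) (𝓝[>] 0) (𝓝 (2 * ⟪y - p, p - y⟫)) := by
    have hz : Tendsto z (𝓝[>] 0) (𝓝 x₀) := by
      have : Continuous z := by fun_prop
      simpa [z] using this.continuousWithinAt.tendsto (x := 0) (s := Ioi 0)
    have hPz := (tendsto_of_dist_eq_infDist hclosed hPA hPd hPu).comp hz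
    exact (tendsto_const_nhds.inner (hPz.sub_const y)).const_mul 2
  have hge := ge_of_tendsto hlim (eventually_nhdsWithin_of_forall hbound)
  rw [← neg_sub y p, inner_neg_right, real_inner_self_eq_norm_sq] at hge
  linarith

/-- **Motzkin's theorem**. -/
theorem convex_of_forall_unpPt [ProperSpace E] {A : Set E} (h : ∀ x, UnpPt A x) :
    Convex ℝ A := by
  choose P hP hPu using h
  have hPA : ∀ x, P x ∈ A := fun x => (hP x).1
  have hclosed : IsClosed A := isClosed_of_forall_exists_dist_eq_infDist fun x => ⟨P x, hP x⟩
  intro a ha b hb s t hs ht hst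
  by_contra hy
  set y := s • a + t • b
  have hδ : 0 < infDist y A := (hclosed.notMem_iff_infDist_pos ⟨a, ha⟩).1 hy
  have hbdd : BddBelow (range fun x => normSqSubInfDistSq A x - 2 * ⟪x, y⟫) := by
    refine ⟨-(s * ‖a‖ ^ 2 + t * ‖b‖ ^ 2), ?_⟩
    rintro _ ⟨x, rfl⟩
    have hxy : ⟪x, y⟫ = s * ⟪x, a⟫ + t * ⟪x, b⟫ := by
      simp only [y, inner_add_right, real_inner_smul_right]
    have ha' := mul_le_mul_of_nonneg_left (two_inner_sub_norm_sq_le_normSqSubInfDistSq ha x) hs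
    have hb' := mul_le_mul_of_nonneg_left (two_inner_sub_norm_sq_le_normSqSubInfDistSq hb x) ht
    have hφ : normSqSubInfDistSq A x =
        s * normSqSubInfDistSq A x + t * normSqSubInfDistSq A x := by
      rw [← add_mul, hst, one_mul]
    simp only [hxy]
    linarith
  have hcont : Continuous fun x => normSqSubInfDistSq A x - 2 * ⟪x, y⟫ := by
    have := continuous_normSqSubInfDistSq A
    fun_prop
  obtain ⟨x₀, hx₀⟩ := hcont.exists_forall_le_add_mul_dist hbdd hδ
  have hnear := two_mul_norm_sq_le_of_forall_le_add_mul_dist hclosed hPA (fun x => (hP x).2)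
    (fun q hq hqd => hPu x₀ q ⟨hq, hqd⟩) hx₀
  have hfar : infDist y A ≤ ‖y - P x₀‖ := by
    rw [← dist_eq_norm]
    exact infDist_le_dist_of_mem (hPA x₀)
  nlinarith

/-- A closed set in ℝ^d has infinite reach iff it is convex. -/
theorem stmt0 {d : ℕ} (A : Set (EuclideanSpace ℝ (Fin d)))
    (hA : A.Nonempty) (hclosed : IsClosed A) :
    setReach A = ⊤ ↔ Convex ℝ A := by
  rw [setReach_eq_top_iff hA]
  exact ⟨convex_of_forall_unpPt, fun hconv => hconv.unpPt hA hclosed⟩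

end
end

section
/- Let A ⊆ ℝ^d, a ∈ A with reach(A, a) > 0, and let C be a closed cone contained in int(Tan(A,a)) ∪ {0}. Then there exists r > 0 such that (a + C) ∩ B(a, r) ⊆ A. -/
open Metric Set Filter
open scoped ENNReal RealInnerProductSpace Topology NNReal

noncomputable section

variable {E : Type*} [NormedAddCommGroup E] [InnerProductSpace ℝ E]

/-!
Suppose the claim fails: then there are `u n ∈ C` with `u n → 0` and `a + u n ∉ A`. Let `ν n` be
the unit normal of `A` at `a + u n`, pointing away from its nearest point `ξ n ∈ A`. Positive reach
gives Federer's inequality `⟪ν n, b - ξ n⟫ ≤ K ‖b - ξ n‖²` for `b ∈ A`, so along a subsequence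
`ν n` converges to a normal `w` of `A` at `a`, while `u n / ‖u n‖` converges to some
`e ∈ C \ {0} ⊆ interior (Tan A a)`; hence `⟪w, e⟫ < 0`. But `ξ n` lies within `2 ‖u n‖` of `a`, so
the same inequality at `b = a` gives `⟪ν n, u n / ‖u n‖⟫ ≥ -O(‖u n‖)`, and in the limit
`⟪w, e⟫ ≥ 0`.

Federer's inequality at `z` comes from a point `x` with `dist x z = R` and
`infDist x A = infDist z A + R`: equality in the triangle inequality puts `x` on the ray from the
nearest point `ξ` of `z` through `z`, and the ball about `x` through `ξ` misses `A`. Such an `x`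
exists because the nearest-point map is continuous near `a`: the distance to `A` then grows at
every rate `c < 1` along the unit normal, so a maximum of `infDist · A - c * dist · z` on
`closedBall z R` lies on the sphere.
-/

section NearestPoint

variable {F : Type*} [NormedAddCommGroup F]

/-- A junk value unless `UnpPt A x`. -/
def nearestPt (A : Set F) (x : F) : F :=
  Classical.epsilon fun y => y ∈ A ∧ dist x y = infDist x A

namespace UnpPt

variable {A : Set F} {x : F}

lemma nearestPt_spec (h : UnpPt A x) :
    nearestPt A x ∈ A ∧ dist x (nearestPt A x) = infDist x A :=
  Classical.epsilon_spec h.exists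

lemma nearestPt_mem (h : UnpPt A x) : nearestPt A x ∈ A := h.nearestPt_spec.1

lemma dist_nearestPt (h : UnpPt A x) : dist x (nearestPt A x) = infDist x A :=
  h.nearestPt_spec.2

lemma eq_nearestPt (h : UnpPt A x) {y : F} (hy : y ∈ A) (hd : dist x y = infDist x A) :
    y = nearestPt A x :=
  h.unique ⟨hy, hd⟩ h.nearestPt_spec

lemma mem_of_mem_closure (h : UnpPt A x) (hx : x ∈ closure A) : x ∈ A := by
  have h0 : dist x (nearestPt A x) = 0 := by
    rw [h.dist_nearestPt, ← mem_closure_iff_infDist_zero ⟨_, h.nearestPt_mem⟩]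
    exact hx
  rw [dist_eq_zero.1 h0]
  exact h.nearestPt_mem

lemma infDist_pos (h : UnpPt A x) (hx : x ∉ A) : 0 < infDist x A :=
  infDist_nonneg.lt_of_ne fun h0 =>
    hx (h.mem_of_mem_closure ((mem_closure_iff_infDist_zero ⟨_, h.nearestPt_mem⟩).2 h0.symm))

lemma dist_nearestPt_le {a : F} (h : UnpPt A x) (ha : a ∈ A) :
    dist (nearestPt A x) a ≤ 2 * dist x a := by
  have := infDist_le_dist_of_mem (x := x) ha
  linarith [dist_triangle_left (nearestPt A x) a x, h.dist_nearestPt]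

end UnpPt

lemma exists_pos_forall_mem_ball_unpPt {A : Set F} {a : F} (h : 0 < locReach A a) :
    ∃ ρ > 0, ∀ x ∈ ball a ρ, UnpPt A x := by
  obtain ⟨r, hr⟩ := lt_iSup_iff.1 h
  obtain ⟨hU, hr0⟩ := lt_iSup_iff.1 hr
  exact ⟨r, by exact_mod_cast hr0, fun x hx => hU x (mem_ball.1 hx)⟩

lemma continuousOn_nearestPt [ProperSpace F] {A : Set F} {a : F} {ρ : ℝ} (ha : a ∈ A)
    (hU : ∀ x ∈ ball a ρ, UnpPt A x) : ContinuousOn (nearestPt A) (ball a (ρ / 2)) := by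
  intro x hx
  rw [mem_ball] at hx
  have hxU : UnpPt A x := hU x (by rw [mem_ball]; linarith [dist_nonneg (x := x) (y := a)])
  have hev : ∀ᶠ y in 𝓝 x, dist y a < ρ / 2 := isOpen_ball.mem_nhds (mem_ball.2 hx)
  have hevU : ∀ᶠ y in 𝓝 x, UnpPt A y := hev.mono fun y hy =>
    hU y (by rw [mem_ball]; linarith [dist_nonneg (x := y) (y := a)])
  refine ContinuousAt.continuousWithinAt <|
    (isCompact_closedBall a ρ).tendsto_nhds_of_unique_mapClusterPt ?_ fun z _ hz => ?_
  · filter_upwards [hev, hevU] with y hy hyU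
    rw [mem_closedBall]
    linarith [hyU.dist_nearestPt_le ha]
  · -- a cluster point `z` is a nearest point of `x` in `closure A`, and `UnpPt A z` puts it in `A`
    obtain ⟨𝓕, hFx, hFz⟩ := mapClusterPt_iff_ultrafilter.1 hz
    have hevF : ∀ᶠ y in (𝓕 : Filter F), UnpPt A y := hFx hevU
    have hd : dist x z = infDist x A := tendsto_nhds_unique
      ((tendsto_id.mono_left hFx).dist hFz |>.congr' (hevF.mono fun y hy => hy.dist_nearestPt))
      ((continuous_infDist_pt A).tendsto x |>.mono_left hFx)
    have hza : dist z a < ρ := by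
      linarith [dist_triangle_left z a x, infDist_le_dist_of_mem (x := x) ha]
    refine hxU.eq_nearestPt ((hU z (mem_ball.2 hza)).mem_of_mem_closure ?_) hd
    exact mem_closure_of_tendsto hFz (hevF.mono fun y hy => hy.nearestPt_mem)

end NearestPoint

def unitNormal (A : Set E) (x : E) : E :=
  (infDist x A)⁻¹ • (x - nearestPt A x)

lemma infDist_smul_unitNormal {A : Set E} {x : E} (hx : infDist x A ≠ 0) :
    infDist x A • unitNormal A x = x - nearestPt A x :=
  smul_inv_smul₀ hx _

namespace UnpPt

variable {A : Set E} {x : E}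

lemma norm_unitNormal (h : UnpPt A x) (hx : 0 < infDist x A) : ‖unitNormal A x‖ = 1 := by
  rw [unitNormal, norm_smul, ← dist_eq_norm, h.dist_nearestPt, norm_inv, Real.norm_of_nonneg hx.le,
    inv_mul_cancel₀ hx.ne']

lemma inner_unitNormal_sub_nearestPt (h : UnpPt A x) (hx : 0 < infDist x A) :
    ⟪unitNormal A x, x - nearestPt A x⟫ = infDist x A := by
  rw [← infDist_smul_unitNormal hx.ne', real_inner_smul_right, real_inner_self_eq_norm_sq,
    h.norm_unitNormal hx]
  ring

end UnpPt

lemma tendsto_add_smul_nhdsGT_zero (x w : E) :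
    Tendsto (fun s : ℝ => x + s • w) (𝓝[>] 0) (𝓝 x) := by
  have : Continuous fun s : ℝ => x + s • w := by fun_prop
  simpa using (this.tendsto 0).mono_left nhdsWithin_le_nhds

lemma eventually_add_mul_lt_infDist_add_smul_unitNormal {A : Set E} {x : E}
    (hU : ∀ᶠ y in 𝓝 x, UnpPt A y) (hcont : ContinuousAt (nearestPt A) x) (hx : 0 < infDist x A)
    {c : ℝ} (hc0 : 0 ≤ c) (hc1 : c < 1) :
    ∀ᶠ s in 𝓝[>] (0 : ℝ), infDist x A + c * s < infDist (x + s • unitNormal A x) A := by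
  set d := infDist x A
  set w := unitNormal A x
  have hxU : UnpPt A x := hU.self_of_nhds
  have hw : ‖w‖ = 1 := hxU.norm_unitNormal hx
  have hnear : ∀ᶠ y in 𝓝 x, dist (nearestPt A y) (nearestPt A x) < (1 - c) * d :=
    hcont (ball_mem_nhds _ (by nlinarith))
  have hline := tendsto_add_smul_nhdsGT_zero x w
  filter_upwards [hline.eventually hU, hline.eventually hnear, self_mem_nhdsWithin]
    with s hsU hsnear (hs : 0 < s)
  set η := nearestPt A (x + s • w)
  have hdη : d ≤ ‖x - η‖ := by
    rw [← dist_eq_norm]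
    exact infDist_le_dist_of_mem hsU.nearestPt_mem
  -- `η` is close to the nearest point of `x`, so `x - η` still has a component `> c d` along `w`
  have hinner : c * d < ⟪x - η, w⟫ := by
    have hsplit : ⟪x - η, w⟫ = ⟪x - nearestPt A x, w⟫ + ⟪nearestPt A x - η, w⟫ := by
      rw [← inner_add_left, sub_add_sub_cancel]
    have hxw : ⟪x - nearestPt A x, w⟫ = d := by
      rw [real_inner_comm]
      exact hxU.inner_unitNormal_sub_nearestPt hx
    have hlow : -‖nearestPt A x - η‖ ≤ ⟪nearestPt A x - η, w⟫ := by
      have := real_inner_le_norm (nearestPt A x - η) (-w)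
      rw [inner_neg_right, norm_neg, hw, mul_one] at this
      linarith
    rw [← dist_eq_norm, dist_comm] at hlow
    nlinarith
  have hexpand : ‖x + s • w - η‖ ^ 2 = ‖x - η‖ ^ 2 + 2 * s * ⟪x - η, w⟫ + s ^ 2 := by
    rw [show x + s • w - η = (x - η) + s • w by abel, norm_add_sq_real, real_inner_smul_right,
      norm_smul, hw, Real.norm_of_nonneg hs.le]
    ring
  have hsq : (d + c * s) ^ 2 < ‖x + s • w - η‖ ^ 2 := by
    have hc2 : c ^ 2 * s ^ 2 ≤ s ^ 2 := by
      have : c ^ 2 ≤ 1 := by nlinarith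
      nlinarith [sq_nonneg s]
    nlinarith [pow_le_pow_left₀ hx.le hdη 2, mul_lt_mul_of_pos_left hinner hs]
  rw [← hsU.dist_nearestPt, dist_eq_norm]
  exact lt_of_pow_lt_pow_left₀ 2 (norm_nonneg _) hsq

section FarPoint

variable [ProperSpace E] {A U : Set E} {z : E} {R : ℝ}

lemma exists_mem_sphere_add_mul_le_infDist (hUo : IsOpen U) (hU : ∀ x ∈ U, UnpPt A x)
    (hcont : ContinuousOn (nearestPt A) U) (hR : 0 < R) (hzU : closedBall z R ⊆ U)
    (hz : 0 < infDist z A) {c : ℝ} (hc0 : 0 ≤ c) (hc1 : c < 1) :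
    ∃ x ∈ sphere z R, infDist z A + c * R ≤ infDist x A := by
  set f : E → ℝ := fun x => infDist x A - c * dist x z
  obtain ⟨x, hxK, hmax⟩ := (isCompact_closedBall z R).exists_isMaxOn
    (nonempty_closedBall.2 hR.le) (by fun_prop : Continuous f).continuousOn
  have hfx : infDist z A ≤ f x := by simpa [f] using hmax (mem_closedBall_self hR.le)
  have hxR : dist x z = R := by
    by_contra hne
    have hxR : dist x z < R := (mem_closedBall.1 hxK).lt_of_ne hne
    have hxU : U ∈ 𝓝 x := hUo.mem_nhds (hzU hxK)
    have hxpos : 0 < infDist x A := by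
      have : 0 ≤ c * dist x z := by positivity
      linarith
    obtain ⟨s, hs, hsR, hs0⟩ := ((eventually_add_mul_lt_infDist_add_smul_unitNormal
      (Filter.mem_of_superset hxU hU) (hcont.continuousAt hxU) hxpos hc0 hc1).and
      ((show ∀ᶠ s in 𝓝[>] (0 : ℝ), s < R - dist x z from
        mem_nhdsWithin_of_mem_nhds (Iio_mem_nhds (sub_pos.2 hxR))).and self_mem_nhdsWithin)).exists
    set y := x + s • unitNormal A x
    have hyx : dist y x = s := by
      rw [dist_eq_norm, add_sub_cancel_left, norm_smul, (hU x (hzU hxK)).norm_unitNormal hxpos,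
        Real.norm_of_nonneg hs0.le, mul_one]
    have hyz : dist y z ≤ dist x z + s := by linarith [dist_triangle y x z]
    have hfy : f x < f y := by
      have : c * dist y z ≤ c * (dist x z + s) := by gcongr
      simp only [f]
      linarith
    exact (hmax (mem_closedBall.2 (by linarith : dist y z ≤ R))).not_gt hfy
  refine ⟨x, mem_sphere.2 hxR, ?_⟩
  simp only [f, hxR] at hfx
  linarith

lemma exists_mem_sphere_add_le_infDist (hUo : IsOpen U) (hU : ∀ x ∈ U, UnpPt A x)
    (hcont : ContinuousOn (nearestPt A) U) (hR : 0 < R) (hzU : closedBall z R ⊆ U)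
    (hz : 0 < infDist z A) : ∃ x ∈ sphere z R, infDist z A + R ≤ infDist x A := by
  have hfar := fun c => exists_mem_sphere_add_mul_le_infDist hUo hU hcont hR hzU hz (c := c)
  obtain ⟨y₀, hy₀, -⟩ := hfar 0 le_rfl one_pos
  obtain ⟨x, hx, hmax⟩ := (isCompact_sphere z R).exists_isMaxOn ⟨y₀, hy₀⟩
    (continuous_infDist_pt A).continuousOn
  refine ⟨x, hx, le_of_tendsto (x := 𝓝[<] (1 : ℝ)) (f := fun c => infDist z A + c * R) ?_ ?_⟩
  · have : Continuous fun c : ℝ => infDist z A + c * R := by fun_prop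
    simpa using (this.tendsto 1).mono_left nhdsWithin_le_nhds
  · filter_upwards [Ioo_mem_nhdsLT one_pos] with c hc
    obtain ⟨y, hy, hle⟩ := hfar c hc.1.le hc.2
    exact hle.trans (hmax hy)

end FarPoint

lemma inv_dist_smul_sub_eq_of_dist_eq_add {x z ξ : E} (hzξ : z ≠ ξ)
    (h : dist x ξ = dist x z + dist z ξ) :
    (dist z ξ)⁻¹ • (z - ξ) = (dist x ξ)⁻¹ • (x - ξ) := by
  have hcol : dist z ξ • (x - z) = dist x z • (z - ξ) := by
    simpa only [dist_eq_norm, sub_add_sub_cancel] using norm_add_eq_iff_real.1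
      (by simpa only [dist_eq_norm, sub_add_sub_cancel] using h : ‖(x - z) + (z - ξ)‖ = _)
  have hx : dist z ξ • (x - ξ) = dist x ξ • (z - ξ) := by
    rw [h, ← sub_add_sub_cancel x z ξ, smul_add, hcol, add_smul]
  have hzξ' : dist z ξ ≠ 0 := dist_ne_zero.2 hzξ
  have hxξ : dist x ξ ≠ 0 := by rw [h]; positivity
  rw [inv_smul_eq_iff₀ hzξ', smul_comm, hx, inv_smul_smul₀ hxξ]

lemma two_mul_inner_le_of_dist_le {x ξ b : E} (h : dist x ξ ≤ dist x b) :
    2 * ⟪x - ξ, b - ξ⟫ ≤ ‖b - ξ‖ ^ 2 := by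
  have hsq := pow_le_pow_left₀ dist_nonneg h 2
  rw [dist_eq_norm, dist_eq_norm, show x - b = (x - ξ) - (b - ξ) by abel,
    norm_sub_sq_real (x - ξ) (b - ξ)] at hsq
  linarith

lemma inner_unitNormal_le [ProperSpace E] {A U : Set E} {z : E} {R : ℝ} (hUo : IsOpen U)
    (hU : ∀ x ∈ U, UnpPt A x) (hcont : ContinuousOn (nearestPt A) U) (hR : 0 < R)
    (hzU : closedBall z R ⊆ U) (hz : 0 < infDist z A) {b : E} (hb : b ∈ A) :
    ⟪unitNormal A z, b - nearestPt A z⟫ ≤ (2 * R)⁻¹ * ‖b - nearestPt A z‖ ^ 2 := by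
  obtain ⟨x, hx, hfar⟩ := exists_mem_sphere_add_le_infDist hUo hU hcont hR hzU hz
  have hzU' : UnpPt A z := hU z (hzU (mem_closedBall_self hR.le))
  set ξ := nearestPt A z
  have hzξ : dist z ξ = infDist z A := hzU'.dist_nearestPt
  rw [mem_sphere] at hx
  have hxA : ∀ y ∈ A, dist x z + dist z ξ ≤ dist x y := fun y hy => by
    linarith [infDist_le_dist_of_mem (x := x) hy]
  have hxξ : dist x ξ = dist x z + dist z ξ :=
    le_antisymm (dist_triangle _ _ _) (hxA ξ hzU'.nearestPt_mem)
  have hw : unitNormal A z = (dist x ξ)⁻¹ • (x - ξ) := by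
    rw [unitNormal, ← hzξ]
    exact inv_dist_smul_sub_eq_of_dist_eq_add (dist_pos.1 (hzξ ▸ hz)) hxξ
  have hinner := two_mul_inner_le_of_dist_le (hxξ.trans_le (hxA b hb))
  have hRx : 2 * R ≤ 2 * dist x ξ := by linarith [dist_nonneg (x := z) (y := ξ)]
  rw [hw, real_inner_smul_left]
  calc (dist x ξ)⁻¹ * ⟪x - ξ, b - ξ⟫ ≤ (dist x ξ)⁻¹ * (‖b - ξ‖ ^ 2 / 2) := by
        gcongr
        linarith
    _ = (2 * dist x ξ)⁻¹ * ‖b - ξ‖ ^ 2 := by ring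
    _ ≤ (2 * R)⁻¹ * ‖b - ξ‖ ^ 2 := by gcongr

lemma mem_nor_of_inner_le_mul_sq {A : Set E} {a w : E} {K : ℝ}
    (h : ∀ b ∈ A, ⟪w, b - a⟫ ≤ K * ‖b - a‖ ^ 2) : w ∈ Nor A a := by
  rintro v (rfl | ⟨x, r, hx, hxa, hv⟩)
  · simp
  have hxa' : Tendsto (fun i => ‖x i - a‖) atTop (𝓝 0) := tendsto_iff_norm_sub_tendsto_zero.1 hxa
  refine le_of_tendsto_of_tendsto' (tendsto_const_nhds.inner hv)
    (by simpa using (hxa'.const_mul K).mul hv.norm) fun i => ?_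
  have hr := (hx i).2.2
  calc ⟪w, r i • (x i - a)⟫ = r i * ⟪w, x i - a⟫ := real_inner_smul_right _ _ _
    _ ≤ r i * (K * ‖x i - a‖ ^ 2) := mul_le_mul_of_nonneg_left (h _ (hx i).1) hr.le
    _ = K * ‖x i - a‖ * ‖r i • (x i - a)‖ := by
      rw [norm_smul, Real.norm_of_nonneg hr.le]
      ring

lemma inner_le_mul_sq_of_tendsto {ι : Type*} {l : Filter ι} [l.NeBot] {A : Set E} {a w : E}
    {ξ ν : ι → E} {K : ℝ} (hξ : Tendsto ξ l (𝓝 a)) (hν : Tendsto ν l (𝓝 w))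
    (h : ∀ i, ∀ b ∈ A, ⟪ν i, b - ξ i⟫ ≤ K * ‖b - ξ i‖ ^ 2) {b : E} (hb : b ∈ A) :
    ⟪w, b - a⟫ ≤ K * ‖b - a‖ ^ 2 :=
  le_of_tendsto_of_tendsto' (hν.inner (tendsto_const_nhds.sub hξ))
    (((tendsto_const_nhds.sub hξ).norm.pow 2).const_mul K) fun i => h i b hb

lemma inner_neg_of_mem_interior {T : Set E} {w e : E} (hw : ∀ v ∈ T, ⟪w, v⟫ ≤ 0) (hw0 : w ≠ 0)
    (he : e ∈ interior T) : ⟪w, e⟫ < 0 := by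
  obtain ⟨δ, hδT, hδ⟩ := (((tendsto_add_smul_nhdsGT_zero e w).eventually
    (mem_interior_iff_mem_nhds.1 he)).and self_mem_nhdsWithin).exists
  have hwδ := hw _ hδT
  rw [inner_add_right, real_inner_smul_right, real_inner_self_eq_norm_sq] at hwδ
  have : 0 < δ * ‖w‖ ^ 2 := by positivity
  linarith

lemma UnpPt.neg_mul_le_inner_unitNormal {A : Set E} {a u : E} {K : ℝ} (h : UnpPt A (a + u))
    (hpos : 0 < infDist (a + u) A) (ha : a ∈ A) (hK0 : 0 ≤ K)
    (hK : ⟪unitNormal A (a + u), a - nearestPt A (a + u)⟫ ≤ K * ‖a - nearestPt A (a + u)‖ ^ 2) :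
    -(4 * K * ‖u‖) ≤ ⟪unitNormal A (a + u), ‖u‖⁻¹ • u⟫ := by
  set ξ := nearestPt A (a + u)
  have hξ : ‖a - ξ‖ ≤ 2 * ‖u‖ := by
    simpa [dist_eq_norm, norm_sub_rev] using h.dist_nearestPt_le ha
  have hu : ⟪unitNormal A (a + u), u⟫ ≥ -(4 * K * ‖u‖ ^ 2) := by
    have hsplit : ⟪unitNormal A (a + u), u⟫ =
        ⟪unitNormal A (a + u), a + u - ξ⟫ - ⟪unitNormal A (a + u), a - ξ⟫ := by
      rw [← inner_sub_right, sub_sub_sub_cancel_right, add_sub_cancel_left]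
    rw [hsplit, h.inner_unitNormal_sub_nearestPt hpos]
    nlinarith [pow_le_pow_left₀ (norm_nonneg _) hξ 2]
  rw [real_inner_smul_right]
  calc -(4 * K * ‖u‖) = ‖u‖⁻¹ * -(4 * K * ‖u‖ ^ 2) := by
        rcases (norm_nonneg u).eq_or_lt with h0 | h0
        · simp [← h0]
        · field_simp
    _ ≤ ‖u‖⁻¹ * ⟪unitNormal A (a + u), u⟫ := by gcongr

lemma inner_unitNormal_le_of_dist_lt [ProperSpace E] {A : Set E} {a z : E} {ρ : ℝ} (ha : a ∈ A)
    (hU : ∀ x ∈ ball a ρ, UnpPt A x) (hz : dist z a < ρ / 4) (hzA : z ∉ A) {b : E} (hb : b ∈ A) :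
    ⟪unitNormal A z, b - nearestPt A z⟫ ≤ (ρ / 2)⁻¹ * ‖b - nearestPt A z‖ ^ 2 := by
  have hρ : 0 < ρ := by linarith [dist_nonneg (x := z) (y := a)]
  have hball : ball a (ρ / 2) ⊆ ball a ρ := ball_subset_ball (by linarith)
  have hzU : closedBall z (ρ / 4) ⊆ ball a (ρ / 2) := fun y hy => by
    rw [mem_closedBall] at hy
    rw [mem_ball]
    linarith [dist_triangle y z a]
  have := inner_unitNormal_le isOpen_ball (fun x hx => hU x (hball hx))
    (continuousOn_nearestPt ha hU) (by positivity) hzU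
    ((hU z (hball (hzU (mem_closedBall_self (by positivity))))).infDist_pos hzA) hb
  rwa [show 2 * (ρ / 4) = ρ / 2 by ring] at this

lemma not_tendsto_zero_of_add_not_mem [ProperSpace E] {A C : Set E} {a : E} {ρ : ℝ} (ha : a ∈ A)
    (hU : ∀ x ∈ ball a ρ, UnpPt A x) (hCclosed : IsClosed C)
    (hCcone : ∀ u ∈ C, ∀ t : ℝ, 0 ≤ t → t • u ∈ C) (hC : C ⊆ interior (Tan A a) ∪ {0})
    {u : ℕ → E} (hu : ∀ n, u n ∈ C ∧ ‖u n‖ < ρ / 4 ∧ a + u n ∉ A) :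
    ¬ Tendsto u atTop (𝓝 0) := by
  intro hlim
  have hua : ∀ n, dist (a + u n) a < ρ / 4 := fun n => by simpa using (hu n).2.1
  have hρ : 0 < ρ := by linarith [hua 0, dist_nonneg (x := a + u 0) (y := a)]
  have hUn : ∀ n, UnpPt A (a + u n) := fun n => hU _ (mem_ball.2 (by linarith [hua n]))
  have hpos : ∀ n, 0 < infDist (a + u n) A := fun n => (hUn n).infDist_pos (hu n).2.2
  have hu0 : ∀ n, u n ≠ 0 := fun n h0 => (hu n).2.2 (by rwa [h0, add_zero])
  have hK : ∀ n, ∀ b ∈ A, ⟪unitNormal A (a + u n), b - nearestPt A (a + u n)⟫ ≤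
      (ρ / 2)⁻¹ * ‖b - nearestPt A (a + u n)‖ ^ 2 := fun n _ hb =>
    inner_unitNormal_le_of_dist_lt ha hU (hua n) (hu n).2.2 hb
  obtain ⟨⟨e, w⟩, ⟨he1, hw1⟩, φ, hφ, hconv⟩ := ((isCompact_sphere (0 : E) 1).prod
    (isCompact_sphere (0 : E) 1)).tendsto_subseq (x := fun n => (‖u n‖⁻¹ • u n,
      unitNormal A (a + u n))) fun n => ⟨by simp [norm_smul, hu0 n],
        by simpa using (hUn n).norm_unitNormal (hpos n)⟩
  rw [mem_sphere_zero_iff_norm] at he1 hw1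
  have heT : e ∈ interior (Tan A a) := (hC (hCclosed.mem_of_tendsto hconv.fst_nhds
    (Eventually.of_forall fun n => hCcone _ (hu _).1 _ (by positivity)))).resolve_right
    (by simp [← norm_ne_zero_iff, he1])
  have hξ : Tendsto (fun n => nearestPt A (a + u (φ n))) atTop (𝓝 a) := by
    have hlimφ := (tendsto_norm_zero.comp hlim).comp hφ.tendsto_atTop
    refine tendsto_iff_dist_tendsto_zero.2 (squeeze_zero (fun _ => dist_nonneg) (fun n => ?_)
      (by simpa using hlimφ.const_mul 2))
    simpa using (hUn (φ n)).dist_nearestPt_le ha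
  have hwN : w ∈ Nor A a := mem_nor_of_inner_le_mul_sq fun b hb =>
    inner_le_mul_sq_of_tendsto hξ hconv.snd_nhds (fun n => hK (φ n)) hb
  have hneg : ⟪w, e⟫ < 0 := inner_neg_of_mem_interior hwN (by simp [← norm_ne_zero_iff, hw1]) heT
  have hnonneg : 0 ≤ ⟪w, e⟫ := by
    refine le_of_tendsto_of_tendsto' ?_ (hconv.snd_nhds.inner hconv.fst_nhds) fun n =>
      (hUn (φ n)).neg_mul_le_inner_unitNormal (hpos _) ha (by positivity) (hK (φ n) a ha)
    simpa using (((tendsto_norm_zero.comp hlim).comp hφ.tendsto_atTop).const_mul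
      (4 * (ρ / 2)⁻¹)).neg
  linarith

/-- A closed cone contained in the interior of the tangent cone (plus 0) is locally
contained in the set. -/
theorem stmt2 {d : ℕ} (A : Set (EuclideanSpace ℝ (Fin d)))
    (a : EuclideanSpace ℝ (Fin d)) (ha : a ∈ A) (h : 0 < locReach A a)
    (C : Set (EuclideanSpace ℝ (Fin d)))
    (hCclosed : IsClosed C)
    (hCcone : ∀ u ∈ C, ∀ t : ℝ, 0 ≤ t → t • u ∈ C)
    (hC : C ⊆ interior (Tan A a) ∪ {0}) :
    ∃ r > (0 : ℝ), ((fun u => a + u) '' C) ∩ ball a r ⊆ A := by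
  obtain ⟨ρ, hρ, hU⟩ := exists_pos_forall_mem_ball_unpPt h
  by_contra! hcon
  have h0 : (0 : EuclideanSpace ℝ (Fin d)) ∈ closure {u | u ∈ C ∧ ‖u‖ < ρ / 4 ∧ a + u ∉ A} := by
    refine Metric.mem_closure_iff.2 fun r hr => ?_
    obtain ⟨_, ⟨⟨u, huC, rfl⟩, hur⟩, huA⟩ := not_subset.1 (hcon (min r (ρ / 4)) (by positivity))
    have hu : ‖u‖ < min r (ρ / 4) := by simpa using hur
    exact ⟨u, ⟨huC, hu.trans_le (min_le_right _ _), huA⟩,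
      by simpa using hu.trans_le (min_le_left _ _)⟩
  obtain ⟨u, hu, hlim⟩ := mem_closure_iff_seq_limit.1 h0
  exact not_tendsto_zero_of_add_not_mem ha hU hCclosed hCcone hC hu hlim
end
end

section
/- Let A ⊆ ℝ^d and a ∈ A with reach(A, a) > 0. Then a is an interior point of A if and only if Tan(A, a) = ℝ^d. -/
/-!
If `a ∈ A` is a boundary point and nearest points to `A` are unique on `ball a ρ`, there is a point
`z` with `‖z - a‖ = infDist z A = ρ / 4`; then `z - a` is a nonzero normal vector at `a`, which
cannot be tangent. To find `z`: uniqueness of nearest points makes `infDist · A` grow at unit rate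
away from the nearest point, so a maximiser of `infDist · A - λ * dist · s` over
`closedBall a (ρ / 4)`, for a seed `s ∉ A`, lies on the sphere. Letting `s → a` and `λ → 1`, the
maximum of `infDist · A` on the sphere is `ρ / 4`.
-/

open Metric Set Filter
open scoped ENNReal RealInnerProductSpace Topology NNReal

noncomputable section

variable {E : Type*} [NormedAddCommGroup E] [InnerProductSpace ℝ E]

section NormedGroup

variable {F : Type*} [NormedAddCommGroup F] {A : Set F}

theorem UnpPt.mem_of_mem_closure_s3 {x : F} (hx : UnpPt A x) (hxA : x ∈ closure A) : x ∈ A := by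
  obtain ⟨p, ⟨hpA, hxp⟩, -⟩ := hx
  rw [(mem_closure_iff_infDist_zero ⟨p, hpA⟩).1 hxA, dist_eq_zero] at hxp
  exact hxp ▸ hpA

theorem closure_inter_ball_subset_of_forall_unpPt {a : F} {ρ : ℝ}
    (hU : ∀ x ∈ ball a ρ, UnpPt A x) : closure A ∩ ball a ρ ⊆ A :=
  fun _ ⟨hxA, hx⟩ => (hU _ hx).mem_of_mem_closure_s3 hxA

theorem exists_pos_forall_unpPt_of_locReach_pos {a : F} (h : 0 < locReach A a) :
    ∃ ρ > 0, ∀ x ∈ ball a ρ, UnpPt A x := by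
  obtain ⟨r, hr⟩ := lt_iSup_iff.1 h
  obtain ⟨hU, hr0⟩ := lt_iSup_iff.1 hr
  exact ⟨r, by exact_mod_cast hr0, fun x hx => hU x (mem_ball.1 hx)⟩

theorem UnpPt.exists_dist_lt_of_dist_le_infDist_add [ProperSpace F] {x p : F} {R η : ℝ}
    (hx : UnpPt A x) (hp : p ∈ A) (hxp : dist x p = infDist x A)
    (hR : infDist x A < R) (hcl : closure A ∩ closedBall x R ⊆ A) (hη : 0 < η) :
    ∃ m > 0, ∀ q ∈ A, dist x q ≤ infDist x A + m → dist q p < η := by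
  set K := closure A ∩ closedBall x R ∩ {q | η ≤ dist q p}
  have hK : IsCompact K :=
    ((isCompact_closedBall x R).inter_left isClosed_closure).inter_right
      (isClosed_le continuous_const (continuous_id.dist continuous_const))
  have hfar : ∀ q ∈ K, infDist x A < dist x q := by
    rintro q ⟨hqcl, hqη⟩
    have hqA := hcl hqcl
    refine (infDist_le_dist_of_mem hqA).lt_of_ne fun hq => ?_
    have hqp : q = p := ExistsUnique.unique hx ⟨hqA, hq.symm⟩ ⟨hp, hxp⟩
    rw [mem_ofPred_eq, hqp, dist_self] at hqη
    linarith
  obtain ⟨D', hD', hK'⟩ :=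
    hK.exists_forall_le' (f := dist x) (continuous_const.dist continuous_id).continuousOn hfar
  refine ⟨min (R - infDist x A) (D' - infDist x A) / 2,
    half_pos (lt_min (by linarith) (by linarith)), fun q hqA hq => ?_⟩
  have hmin := min_le_left (R - infDist x A) (D' - infDist x A)
  have hmin' := min_le_right (R - infDist x A) (D' - infDist x A)
  by_contra! hqη
  have hqR : q ∈ closedBall x R := by
    rw [mem_closedBall, dist_comm]
    linarith
  have := hK' q ⟨⟨subset_closure hqA, hqR⟩, hqη⟩
  linarith

end NormedGroup

section InnerProduct

variable {A : Set E}

/-- Take `y = x + ε • (x - p) / ‖x - p‖` for the nearest point `p`: points of `A` near `p` are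
handled by expanding the square, the others are far from `x` by the previous lemma. -/
theorem UnpPt.exists_infDist_add_mul_dist_le [ProperSpace E] {x : E} {R lam ε₀ : ℝ}
    (hx : UnpPt A x) (hxA : x ∉ A) (hR : infDist x A < R)
    (hcl : closure A ∩ closedBall x R ⊆ A) (hl0 : 0 ≤ lam) (hl1 : lam < 1) (hε₀ : 0 < ε₀) :
    ∃ y, 0 < dist y x ∧ dist y x < ε₀ ∧ infDist x A + lam * dist y x ≤ infDist y A := by
  obtain ⟨p, ⟨hpA, hxp⟩, -⟩ := id hx
  set D := infDist x A
  have hD : 0 < D := (infDist_pos_iff_notMem_closure ⟨p, hpA⟩).1 fun h =>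
    hxA (hcl ⟨h, mem_closedBall_self (infDist_nonneg.trans hR.le)⟩)
  obtain ⟨m, hm, hnear⟩ :=
    hx.exists_dist_lt_of_dist_le_infDist_add hpA hxp hR hcl (mul_pos (sub_pos.2 hl1) hD)
  set ε := min (ε₀ / 2) (m / 2)
  have hε : 0 < ε := lt_min (half_pos hε₀) (half_pos hm)
  set u := D⁻¹ • (x - p)
  have hxp' : ‖x - p‖ = D := by rw [← dist_eq_norm, hxp]
  have hu : ‖u‖ = 1 := by
    rw [norm_smul, hxp', norm_inv, Real.norm_of_nonneg hD.le, inv_mul_cancel₀ hD.ne']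
  have hyx : dist (x + ε • u) x = ε := by
    rw [dist_eq_norm, add_sub_cancel_left, norm_smul, hu, Real.norm_of_nonneg hε.le, mul_one]
  refine ⟨x + ε • u, ?_, ?_, ?_⟩ <;> rw [hyx]
  · exact hε
  · exact (min_le_left _ _).trans_lt (half_lt_self hε₀)
  refine (le_infDist ⟨p, hpA⟩).2 fun q hqA => ?_
  by_cases hqp : dist q p < (1 - lam) * D
  · have hxq : D ≤ ‖x - q‖ := by rw [← dist_eq_norm]; exact infDist_le_dist_of_mem hqA
    have hinner : lam * D ≤ ⟪x - q, u⟫ := by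
      have hsplit : ⟪x - q, u⟫ = D + ⟪p - q, u⟫ := by
        rw [show x - q = (x - p) + (p - q) by abel, inner_add_left, real_inner_smul_right,
          real_inner_self_eq_norm_sq, hxp']
        field_simp
      have := real_inner_le_norm (p - q) (-u)
      rw [inner_neg_right, norm_neg, hu, ← dist_eq_norm, dist_comm] at this
      nlinarith
    have hsq : (D + lam * ε) ^ 2 ≤ dist (x + ε • u) q ^ 2 := by
      rw [dist_eq_norm, show x + ε • u - q = (x - q) + ε • u by abel, norm_add_sq_real,
        real_inner_smul_right, norm_smul, hu, Real.norm_of_nonneg hε.le]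
      nlinarith [mul_le_mul_of_nonneg_left hinner hε.le, pow_le_pow_left₀ hD.le hxq 2,
        mul_le_mul_of_nonneg_right (show lam ^ 2 ≤ 1 by nlinarith) (sq_nonneg ε)]
    exact le_of_pow_le_pow_left₀ two_ne_zero dist_nonneg hsq
  · have hfar : D + m < dist x q := by
      by_contra! h
      exact hqp (hnear q hqA h)
    have := dist_triangle x (x + ε • u) q
    rw [dist_comm x (x + ε • u), hyx] at this
    nlinarith [min_le_right (ε₀ / 2) (m / 2)]

/-- Maximum principle for `infDist · A - lam * dist · s` on `closedBall a (ρ / 4)`: at an interior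
maximiser the previous lemma would produce a larger value. -/
theorem exists_mem_sphere_mul_le_infDist [ProperSpace E] {a s : E} {ρ lam : ℝ} (hρ : 0 < ρ)
    (hU : ∀ x ∈ ball a ρ, UnpPt A x) (ha : a ∈ A) (hs : s ∈ closedBall a (ρ / 4)) (hsA : s ∉ A)
    (hl0 : 0 ≤ lam) (hl1 : lam < 1) :
    ∃ z ∈ sphere a (ρ / 4), lam * (ρ / 4 - dist s a) ≤ infDist z A := by
  have hcl := closure_inter_ball_subset_of_forall_unpPt hU
  have hsa := mem_closedBall.1 hs
  obtain ⟨z, hz, hmax⟩ := (isCompact_closedBall a (ρ / 4)).exists_isMaxOn ⟨s, hs⟩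
    ((continuous_infDist_pt A).sub
      (continuous_const.mul (continuous_id.dist continuous_const))).continuousOn
  have hgs : infDist s A - lam * dist s s ≤ infDist z A - lam * dist z s := hmax hs
  rw [dist_self, mul_zero, sub_zero] at hgs
  have hs_pos : 0 < infDist s A := (infDist_pos_iff_notMem_closure ⟨a, ha⟩).1 fun h =>
    hsA (hcl ⟨h, mem_ball.2 (by linarith)⟩)
  have hzs := mul_le_mul_of_nonneg_left (dist_triangle z s a) hl0
  rcases (mem_closedBall.1 hz).eq_or_lt with hza | hza
  · exact ⟨z, mem_sphere.2 hza, by nlinarith⟩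
  exfalso
  have hzA : z ∉ A := fun h => by
    rw [infDist_zero_of_mem h] at hgs
    nlinarith [mul_nonneg hl0 (dist_nonneg (x := z) (y := s))]
  have hcl' : closure A ∩ closedBall z (ρ / 2) ⊆ A :=
    fun w hw => hcl ⟨hw.1, closedBall_subset_ball' (by linarith) hw.2⟩
  obtain ⟨y, hy0, hyz, hy⟩ := (hU z (mem_ball.2 (by linarith))).exists_infDist_add_mul_dist_le
    hzA ((infDist_le_dist_of_mem ha).trans_lt (by linarith)) hcl'
    (lam := (1 + lam) / 2) (by linarith) (by linarith) (ε₀ := ρ / 4 - dist z a) (by linarith)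
  have hgy : infDist y A - lam * dist y s ≤ infDist z A - lam * dist z s :=
    hmax (mem_closedBall.2 (by linarith [dist_triangle y z a]))
  nlinarith [mul_le_mul_of_nonneg_left (dist_triangle y z s) hl0]

theorem exists_mem_sphere_infDist_eq_of_notMem_interior [ProperSpace E] {a : E} {ρ : ℝ}
    (hρ : 0 < ρ) (hU : ∀ x ∈ ball a ρ, UnpPt A x) (ha : a ∈ A) (hint : a ∉ interior A) :
    ∃ z ∈ sphere a (ρ / 4), infDist z A = ρ / 4 := by
  have hclc : a ∈ closure Aᶜ := by rwa [closure_compl, mem_compl_iff]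
  set t : ℕ → ℝ := fun n => 1 / (n + 1)
  have ht : ∀ n, 0 < t n := fun n => by positivity
  have ht1 : ∀ n, t n ≤ 1 := fun n => (div_le_one (by positivity)).2 (by simp)
  have hlow : ∀ n, ∃ z ∈ sphere a (ρ / 4), (1 - t n) * (ρ / 4 - t n) ≤ infDist z A := by
    intro n
    obtain ⟨s, hsA, hsa⟩ :=
      Metric.mem_closure_iff.1 hclc (min (ρ / 4) (t n)) (lt_min (by positivity) (ht n))
    rw [dist_comm] at hsa
    obtain ⟨z, hz, hzs⟩ := exists_mem_sphere_mul_le_infDist hρ hU ha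
      (mem_closedBall.2 (hsa.le.trans (min_le_left _ _))) hsA
      (sub_nonneg.2 (ht1 n)) (sub_lt_self _ (ht n))
    refine ⟨z, hz, le_trans ?_ hzs⟩
    exact mul_le_mul_of_nonneg_left (by linarith [min_le_right (ρ / 4) (t n)])
      (sub_nonneg.2 (ht1 n))
  obtain ⟨z₀, hz₀, -⟩ := hlow 0
  obtain ⟨z, hz, hmax⟩ := (isCompact_sphere a (ρ / 4)).exists_isMaxOn ⟨z₀, hz₀⟩
    (continuous_infDist_pt A).continuousOn
  refine ⟨z, hz, le_antisymm (mem_sphere.1 hz ▸ infDist_le_dist_of_mem ha) ?_⟩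
  have hlim : Tendsto (fun n => (1 - t n) * (ρ / 4 - t n)) atTop (𝓝 (ρ / 4)) := by
    have hcont : Continuous fun x : ℝ => (1 - x) * (ρ / 4 - x) := by fun_prop
    simpa [t, Function.comp_def] using
      (hcont.tendsto 0).comp tendsto_one_div_add_atTop_nhds_zero_nat
  refine le_of_tendsto' hlim fun n => ?_
  obtain ⟨z', hz', hz'n⟩ := hlow n
  exact hz'n.trans (hmax hz')

theorem sub_mem_nor_of_dist_le_infDist {a z : E} (hz : dist z a ≤ infDist z A) :
    z - a ∈ Nor A a := by
  rintro v (rfl | ⟨y, r, hy, hya, hlim⟩)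
  · rw [inner_zero_right]
  have hstep : ∀ i, 2 * ⟪z - a, r i • (y i - a)⟫ ≤ ‖r i • (y i - a)‖ * ‖y i - a‖ := by
    intro i
    obtain ⟨hyA, -, hr⟩ := hy i
    have hsq : ‖z - a‖ ^ 2 ≤ ‖(z - a) - (y i - a)‖ ^ 2 := by
      rw [sub_sub_sub_cancel_right, ← dist_eq_norm, ← dist_eq_norm]
      exact pow_le_pow_left₀ dist_nonneg (hz.trans (infDist_le_dist_of_mem hyA)) 2
    rw [norm_sub_sq_real (z - a)] at hsq
    rw [real_inner_smul_right, norm_smul, Real.norm_of_nonneg hr.le]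
    nlinarith
  have hnorm : Tendsto (fun i => ‖y i - a‖) atTop (𝓝 0) := by
    simpa using (hya.sub_const a).norm
  have := le_of_tendsto_of_tendsto' ((tendsto_const_nhds.inner hlim).const_mul 2)
    (hlim.norm.mul hnorm) hstep
  linarith

theorem tan_eq_univ_of_mem_interior {a : E} (ha : a ∈ interior A) : Tan A a = univ := by
  refine eq_univ_of_forall fun u => ?_
  rcases eq_or_ne u 0 with rfl | hu
  · exact Or.inl rfl
  obtain ⟨ε, hε, hball⟩ := Metric.isOpen_iff.1 isOpen_interior a ha
  have hu' : 0 < ‖u‖ := norm_pos_iff.2 hu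
  set t : ℕ → ℝ := fun n => ε / (2 * ‖u‖) / (n + 1)
  have ht : ∀ n, 0 < t n := fun n => by positivity
  refine Or.inr ⟨fun n => a + t n • u, fun n => (t n)⁻¹,
    fun n => ⟨interior_subset (hball ?_), ?_, inv_pos.2 (ht n)⟩, ?_, ?_⟩
  · rw [mem_ball, dist_eq_norm, add_sub_cancel_left, norm_smul, Real.norm_of_nonneg (ht n).le]
    have : t n ≤ ε / (2 * ‖u‖) := div_le_self (by positivity) (by simp)
    calc t n * ‖u‖ ≤ ε / (2 * ‖u‖) * ‖u‖ := by gcongr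
      _ < ε := by field_simp; linarith
  · simpa [(ht n).ne'] using hu
  · have := (tendsto_one_div_add_atTop_nhds_zero_nat.const_mul (ε / (2 * ‖u‖))).smul_const u
    simpa [t, div_eq_mul_one_div (ε / (2 * ‖u‖))] using tendsto_const_nhds.add this
  · simp [smul_smul, inv_mul_cancel₀ (ht _).ne']

end InnerProduct

/-- At a point of positive reach, a is interior to A iff the tangent cone is all of ℝ^d. -/
theorem stmt3 {d : ℕ} (A : Set (EuclideanSpace ℝ (Fin d)))
    (a : EuclideanSpace ℝ (Fin d)) (ha : a ∈ A) (h : 0 < locReach A a) :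
    a ∈ interior A ↔ Tan A a = univ := by
  refine ⟨tan_eq_univ_of_mem_interior, fun htan => ?_⟩
  by_contra hint
  obtain ⟨ρ, hρ, hU⟩ := exists_pos_forall_unpPt_of_locReach_pos h
  obtain ⟨z, hz, hzA⟩ := exists_mem_sphere_infDist_eq_of_notMem_interior hρ hU ha hint
  have hnor : z - a ∈ Nor A a := sub_mem_nor_of_dist_le_infDist (by rw [mem_sphere.1 hz, hzA])
  have hza : z - a = 0 := real_inner_self_nonpos.1 (hnor (z - a) (htan ▸ mem_univ _))
  rw [mem_sphere, dist_eq_norm, hza, norm_zero] at hz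
  linarith
end
end

section
/- Let A ⊆ ℝ^d with reach(A) > ρ > 0, let a ∈ A be such that Tan(A, a) = {t u : t ≥ 0} for a unit vector u, set P := {a − t u : 0 < t ≤ ρ/4} and A* := A ∪ P. Then reach(A*) ≥ ρ/4. -/
open Metric Set Filter
open scoped ENNReal RealInnerProductSpace Topology NNReal

noncomputable section

variable {E : Type*} [NormedAddCommGroup E] [InnerProductSpace ℝ E]

/-! Positive reach makes `A` closed, and a normal ray at `a` keeps `a` as nearest point up to
length `ρ`: along `a + s • v`, with `v` strictly negative on the tangent ray, the first failure
would produce nearest points `b ≠ a` converging to `a` whose directions tend to a tangent vector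
on which `v` is nonnegative. Hence `2 ρ ⟪y, b - a⟫ ≤ ‖y‖ ‖b - a‖²` for `b ∈ A` and every `y`
with `⟪y, u⟫ ≤ 0`. Near `A ∪ P`, two nearest points in `A` agree by the reach of `A`, two on the
segment by convexity, and `p ∈ A` cannot tie with `q = a - t • u`: the first-order condition at
`q` gives `⟪x - q, u⟫ ≤ 0`, Federer's inequality for `y = x - q` then forces `⟪p - a, u⟫ < 0`,
and the inequality for `y = p - a` forces `‖p - a‖ ≥ 2 ρ`, too far from `x`. -/

section Metric

variable {F : Type*} [NormedAddCommGroup F]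

theorem unpPt_of_lt_setReach {A : Set F} {ρ : ℝ} (h : ENNReal.ofReal ρ < setReach A) {b x : F}
    (hb : b ∈ A) (hx : dist x b < ρ) : UnpPt A x := by
  obtain ⟨r, hr⟩ := lt_iSup_iff.1 (h.trans_le (iInf₂_le b hb))
  obtain ⟨hunp, hρr⟩ := lt_iSup_iff.1 hr
  rw [← ENNReal.ofReal_coe_nnreal, ENNReal.ofReal_lt_ofReal_iff'] at hρr
  exact hunp x (hx.trans hρr.1)

theorem ofReal_le_setReach {A : Set F} {r : ℝ} (h : ∀ x, infDist x A < r → UnpPt A x) :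
    ENNReal.ofReal r ≤ setReach A := by
  refine le_iInf₂ fun b hb => le_iSup₂_of_le (f := fun (r : ℝ≥0) _ => (r : ℝ≥0∞))
    r.toNNReal (fun x hx => h x ?_) le_rfl
  rw [Real.coe_toNNReal', lt_max_iff] at hx
  exact (infDist_le_dist_of_mem hb).trans_lt (hx.resolve_right dist_nonneg.not_gt)

theorem UnpPt.mem_of_infDist_eq_zero {A : Set F} {x : F} (h : UnpPt A x)
    (h0 : infDist x A = 0) : x ∈ A := by
  obtain ⟨p, ⟨hp, hxp⟩, -⟩ := h
  rw [h0, dist_eq_zero] at hxp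
  exact hxp ▸ hp

theorem isClosed_of_lt_setReach {A : Set F} {ρ : ℝ} (hρ : 0 < ρ)
    (h : ENNReal.ofReal ρ < setReach A) : IsClosed A := by
  refine closure_subset_iff_isClosed.1 fun x hx => ?_
  have hne : A.Nonempty := closure_nonempty_iff.1 ⟨x, hx⟩
  have h0 := (mem_closure_iff_infDist_zero hne).1 hx
  obtain ⟨b, hb, hxb⟩ := (infDist_lt_iff hne).1 (h0 ▸ hρ)
  exact (unpPt_of_lt_setReach h hb hxb).mem_of_infDist_eq_zero h0

theorem UnpPt.tendsto_of_dist_eq_infDist [ProperSpace F] {A : Set F} (hA : IsClosed A) {x p : F}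
    (hx : UnpPt A x) (hp : p ∈ A ∧ dist x p = infDist x A) {xs bs : ℕ → F}
    (hxs : Tendsto xs atTop (𝓝 x)) (hbs : ∀ n, bs n ∈ A ∧ dist (xs n) (bs n) = infDist (xs n) A) :
    Tendsto bs atTop (𝓝 p) := by
  have hbdd : ∀ᶠ n in atTop, bs n ∈ closedBall x (dist x p + 2) := by
    filter_upwards [hxs (ball_mem_nhds x one_pos)] with n hn
    rw [mem_preimage, mem_ball] at hn
    rw [mem_closedBall]
    calc dist (bs n) x ≤ dist (xs n) (bs n) + dist (xs n) x := dist_triangle_left _ _ _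
      _ ≤ dist (xs n) p + dist (xs n) x := by
          rw [(hbs n).2]; gcongr; exact infDist_le_dist_of_mem hp.1
      _ ≤ dist x p + 2 := by linarith [dist_triangle (xs n) x p]
  refine (isCompact_closedBall x _).tendsto_nhds_of_unique_mapClusterPt hbdd fun c _ hc => ?_
  obtain ⟨ψ, hψ, hbψ⟩ := hc.tendsto_subseq
  have hxψ := hxs.comp hψ.tendsto_atTop
  have hcx : dist x c = infDist x A := tendsto_nhds_unique (hxψ.dist hbψ)
    ((((continuous_infDist_pt A).tendsto x).comp hxψ).congr fun n => ((hbs (ψ n)).2).symm)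
  exact hx.unique ⟨hA.mem_of_tendsto hbψ (Eventually.of_forall fun n => (hbs _).1), hcx⟩ hp

end Metric

theorem exists_norm_eq_one_mem_tan [ProperSpace E] {A : Set E} {a : E} {xs : ℕ → E}
    (hxs : ∀ n, xs n ∈ A ∧ xs n ≠ a) (hlim : Tendsto xs atTop (𝓝 a)) :
    ∃ w ∈ Tan A a, ‖w‖ = 1 ∧ ∃ ψ : ℕ → ℕ, StrictMono ψ ∧
      Tendsto (fun n => ‖xs (ψ n) - a‖⁻¹ • (xs (ψ n) - a)) atTop (𝓝 w) := by
  have hpos : ∀ n, 0 < ‖xs n - a‖ := fun n => norm_pos_iff.2 (sub_ne_zero.2 (hxs n).2)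
  have hsph : ∀ n, ‖xs n - a‖⁻¹ • (xs n - a) ∈ sphere (0 : E) 1 := fun n => by
    rw [mem_sphere_zero_iff_norm, norm_smul, norm_inv, norm_norm, inv_mul_cancel₀ (hpos n).ne']
  obtain ⟨w, hw, ψ, hψ, hlimw⟩ := (isCompact_sphere (0 : E) 1).tendsto_subseq hsph
  exact ⟨w, Or.inr ⟨xs ∘ ψ, fun n => ‖xs (ψ n) - a‖⁻¹,
    fun n => ⟨(hxs _).1, (hxs _).2, inv_pos.2 (hpos _)⟩, hlim.comp hψ.tendsto_atTop, hlimw⟩,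
    mem_sphere_zero_iff_norm.1 hw, ψ, hψ, hlimw⟩

theorem eventually_inner_neg_of_forall_tan [ProperSpace E] {A : Set E} {a v : E}
    (hv : ∀ w ∈ Tan A a, w ≠ 0 → ⟪v, w⟫ < 0) : ∀ᶠ x in 𝓝[A \ {a}] a, ⟪v, x - a⟫ < 0 := by
  by_contra h
  obtain ⟨xs, hlim, hxs⟩ := exists_seq_forall_of_frequently
    ((not_eventually.1 h).and_eventually self_mem_nhdsWithin)
  obtain ⟨w, hwT, hw1, ψ, -, hlimw⟩ := exists_norm_eq_one_mem_tan
    (fun n => ⟨(hxs n).2.1, (hxs n).2.2⟩) (tendsto_nhdsWithin_iff.1 hlim).1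
  refine (hv w hwT (norm_ne_zero_iff.1 (hw1 ▸ one_ne_zero))).not_ge
    (ge_of_tendsto (tendsto_const_nhds.inner hlimw) (Eventually.of_forall fun n => ?_))
  rw [real_inner_smul_right]
  exact mul_nonneg (inv_nonneg.2 (norm_nonneg _)) (not_lt.1 (hxs (ψ n)).1)

theorem dist_add_smul_sq {a b v : E} (s : ℝ) (hv : ‖v‖ = 1) :
    dist (a + s • v) b ^ 2 = s ^ 2 - 2 * s * ⟪v, b - a⟫ + ‖b - a‖ ^ 2 := by
  rw [dist_eq_norm, show a + s • v - b = s • v - (b - a) by abel, norm_sub_sq_real, norm_smul,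
    hv, real_inner_smul_left, Real.norm_eq_abs, mul_one, sq_abs, mul_assoc]

theorem inner_pos_of_dist_add_smul_lt {a b v : E} {s : ℝ} (hv : ‖v‖ = 1)
    (h : dist (a + s • v) b < s) : 0 < ⟪v, b - a⟫ := by
  have hs : 0 < s := dist_nonneg.trans_lt h
  have h2 : dist (a + s • v) b ^ 2 < s ^ 2 := by gcongr
  rw [dist_add_smul_sq s hv] at h2
  nlinarith [sq_nonneg ‖b - a‖]

theorem two_mul_inner_le_of_le_dist_add_smul {a b v : E} {s : ℝ} (hs : 0 ≤ s) (hv : ‖v‖ = 1)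
    (h : s ≤ dist (a + s • v) b) : 2 * s * ⟪v, b - a⟫ ≤ ‖b - a‖ ^ 2 := by
  have h2 : s ^ 2 ≤ dist (a + s • v) b ^ 2 := by gcongr
  rw [dist_add_smul_sq s hv] at h2
  linarith

theorem le_infDist_add_smul [ProperSpace E] {A : Set E} (hA : IsClosed A) {a v : E} (ha : a ∈ A)
    {ρ : ℝ} (hρ : 0 ≤ ρ) (hunp : ∀ x, dist x a < ρ → UnpPt A x) (hv1 : ‖v‖ = 1)
    (hv : ∀ᶠ x in 𝓝[A \ {a}] a, ⟪v, x - a⟫ < 0) : ρ ≤ infDist (a + ρ • v) A := by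
  set S := {s : ℝ | s ≤ infDist (a + s • v) A}
  have hS : IsClosed S := isClosed_le continuous_id (by fun_prop)
  refine (hS.inter isClosed_Icc).Icc_subset_of_forall_mem_nhdsWithin infDist_nonneg
    (fun s₀ ⟨hs₀, hs₀I⟩ => ?_) ⟨hρ, le_rfl⟩
  have hdist₀ : dist (a + s₀ • v) a = s₀ := by
    rw [dist_eq_norm, add_sub_cancel_left, norm_smul, hv1, mul_one, Real.norm_of_nonneg hs₀I.1]
  by_contra h
  obtain ⟨ss, hss, hlt⟩ := exists_seq_forall_of_frequently (not_eventually.1 h)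
  have hlim : Tendsto (fun n => a + ss n • v) atTop (𝓝 (a + s₀ • v)) :=
    tendsto_const_nhds.add ((tendsto_nhdsWithin_iff.1 hss).1.smul_const v)
  choose bs hbs using fun n => hA.exists_infDist_eq_dist ⟨a, ha⟩ (a + ss n • v)
  have hbs_lim : Tendsto bs atTop (𝓝 a) :=
    (hunp _ (hdist₀.trans_lt hs₀I.2)).tendsto_of_dist_eq_infDist hA
      ⟨ha, le_antisymm (hdist₀.trans_le hs₀) (infDist_le_dist_of_mem ha)⟩ hlim
      fun n => ⟨(hbs n).1, (hbs n).2.symm⟩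
  have hpos : ∀ n, 0 < ⟪v, bs n - a⟫ := fun n =>
    inner_pos_of_dist_add_smul_lt hv1 ((hbs n).2 ▸ not_le.1 (hlt n))
  have hbs_lim' : Tendsto bs atTop (𝓝[A \ {a}] a) := tendsto_nhdsWithin_iff.2
    ⟨hbs_lim, Eventually.of_forall fun n => ⟨(hbs n).1, fun h => (hpos n).ne' <| by
      rw [show bs n = a from h, sub_self, inner_zero_right]⟩⟩
  obtain ⟨n, hn⟩ := (hbs_lim'.eventually hv).exists
  exact (hpos n).not_gt hn

theorem two_mul_inner_le_of_forall_tan [ProperSpace E] {A : Set E} (hA : IsClosed A) {a b y : E}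
    (ha : a ∈ A) (hb : b ∈ A) {ρ : ℝ} (hρ : 0 ≤ ρ) (hunp : ∀ x, dist x a < ρ → UnpPt A x)
    (hy : ∀ w ∈ Tan A a, w ≠ 0 → ⟪y, w⟫ < 0) :
    2 * ρ * ⟪y, b - a⟫ ≤ ‖y‖ * ‖b - a‖ ^ 2 := by
  rcases eq_or_ne y 0 with rfl | hy0
  · simp
  have hny : 0 < ‖y‖ := norm_pos_iff.2 hy0
  have hv : ∀ w ∈ Tan A a, w ≠ 0 → ⟪‖y‖⁻¹ • y, w⟫ < 0 := fun w hw hw0 => by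
    rw [real_inner_smul_left]
    exact mul_neg_of_pos_of_neg (inv_pos.2 hny) (hy w hw hw0)
  have hv1 : ‖‖y‖⁻¹ • y‖ = 1 := norm_smul_inv_norm hy0
  have key := two_mul_inner_le_of_le_dist_add_smul hρ hv1 <|
    (le_infDist_add_smul hA ha hρ hunp hv1 (eventually_inner_neg_of_forall_tan hv)).trans
      (infDist_le_dist_of_mem hb)
  rw [real_inner_smul_left] at key
  calc 2 * ρ * ⟪y, b - a⟫ = ‖y‖ * (2 * ρ * (‖y‖⁻¹ * ⟪y, b - a⟫)) := by field_simp
    _ ≤ ‖y‖ * ‖b - a‖ ^ 2 := by gcongr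

theorem two_mul_inner_le_of_tan_eq_ray [ProperSpace E] {A : Set E} (hA : IsClosed A)
    {a b u y : E} (ha : a ∈ A) (hb : b ∈ A) {ρ : ℝ} (hρ : 0 ≤ ρ)
    (hunp : ∀ x, dist x a < ρ → UnpPt A x) (htan : Tan A a = {x | ∃ t : ℝ, 0 ≤ t ∧ x = t • u})
    (hyu : ⟪y, u⟫ ≤ 0) : 2 * ρ * ⟪y, b - a⟫ ≤ ‖y‖ * ‖b - a‖ ^ 2 := by
  have hpert : ∀ ε : ℝ, 0 < ε →
      0 ≤ ‖y - ε • u‖ * ‖b - a‖ ^ 2 - 2 * ρ * ⟪y - ε • u, b - a⟫ := by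
    intro ε hε
    refine sub_nonneg.2 (two_mul_inner_le_of_forall_tan hA ha hb hρ hunp fun w hw hw0 => ?_)
    rw [htan] at hw
    obtain ⟨t, ht, rfl⟩ := hw
    have ht0 : 0 < t := ht.lt_of_ne (by rintro rfl; simp at hw0)
    have hu : 0 < ‖u‖ := norm_pos_iff.2 (by rintro rfl; simp at hw0)
    rw [real_inner_smul_right, inner_sub_left, real_inner_smul_left, real_inner_self_eq_norm_sq]
    nlinarith [mul_pos ht0 (mul_pos hε (pow_pos hu 2))]
  have hcont : Continuous fun ε : ℝ =>
      ‖y - ε • u‖ * ‖b - a‖ ^ 2 - 2 * ρ * ⟪y - ε • u, b - a⟫ := by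
    fun_prop
  simpa using ge_of_tendsto ((hcont.tendsto 0).mono_left nhdsWithin_le_nhds)
    (eventually_nhdsWithin_of_forall (s := Ioi 0) hpert)

theorem Convex.inner_sub_nonpos_of_forall_dist_le {K : Set E} (hK : Convex ℝ K) {x q w : E}
    (hq : q ∈ K) (hmin : ∀ w ∈ K, dist x q ≤ dist x w) (hw : w ∈ K) : ⟪x - q, w - q⟫ ≤ 0 := by
  refine (norm_eq_iInf_iff_real_inner_le_zero hK hq).1 ?_ w hw
  have : Nonempty K := ⟨⟨q, hq⟩⟩
  have hbdd : BddBelow (range fun w : K => ‖x - w‖) :=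
    ⟨0, by rintro _ ⟨w, rfl⟩; exact norm_nonneg _⟩
  refine le_antisymm (le_ciInf fun w => ?_) (ciInf_le hbdd ⟨q, hq⟩)
  simpa only [dist_eq_norm] using hmin w w.2

theorem Convex.eq_of_forall_dist_le {K : Set E} (hK : Convex ℝ K) {x p q : E} (hp : p ∈ K)
    (hq : q ∈ K) (hpmin : ∀ w ∈ K, dist x p ≤ dist x w) (hqmin : ∀ w ∈ K, dist x q ≤ dist x w) :
    p = q := by
  have hp' := hK.inner_sub_nonpos_of_forall_dist_le hp hpmin hq
  have hq' := hK.inner_sub_nonpos_of_forall_dist_le hq hqmin hp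
  have : ⟪q - p, q - p⟫ ≤ 0 := by
    have e : ⟪q - p, q - p⟫ = ⟪x - p, q - p⟫ + ⟪x - q, p - q⟫ := by
      rw [← neg_sub q p, inner_neg_right, ← sub_eq_add_neg, ← inner_sub_left,
        sub_sub_sub_cancel_left]
    linarith
  rw [real_inner_self_nonpos, sub_eq_zero] at this
  exact this.symm
theorem dist_sub_smul_lt_dist_of_mem {A : Set E} {a u x p : E} {ρ t : ℝ} (hρ : 0 < ρ)
    (hu : ‖u‖ = 1)
    (hfed : ∀ y, ⟪y, u⟫ ≤ 0 → ∀ b ∈ A, 2 * ρ * ⟪y, b - a⟫ ≤ ‖y‖ * ‖b - a‖ ^ 2)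
    (hp : p ∈ A) (ht : 0 < t) (htρ : t ≤ ρ / 4) (hxq : dist x (a - t • u) < ρ / 4)
    (hfoc : ⟪x - (a - t • u), u⟫ ≤ 0) : dist x (a - t • u) < dist x p := by
  by_contra! hle
  set y := x - (a - t • u)
  set z := p - a
  have hy : ‖y‖ < ρ / 4 := by rwa [← dist_eq_norm]
  have hm : ‖z + t • u‖ ^ 2 ≤ 2 * ⟪y, z + t • u⟫ := by
    have h1 : ‖y - (z + t • u)‖ ^ 2 ≤ ‖y‖ ^ 2 := by
      rw [show y - (z + t • u) = x - p by simp only [y, z]; abel, ← dist_eq_norm, ← dist_eq_norm]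
      gcongr
    rw [norm_sub_sq_real] at h1
    linarith
  have hzu : ‖z + t • u‖ ^ 2 = ‖z‖ ^ 2 + 2 * t * ⟪z, u⟫ + t ^ 2 := by
    rw [norm_add_sq_real, real_inner_smul_right, norm_smul, hu, Real.norm_of_nonneg ht.le]
    ring
  rw [hzu, inner_add_right, real_inner_smul_right] at hm
  rcases le_or_gt 0 ⟪z, u⟫ with hzu0 | hzu0
  · nlinarith [hfed y hfoc p hp, mul_le_mul_of_nonneg_right hy.le (sq_nonneg ‖z‖),
      mul_nonneg (mul_nonneg hρ.le ht.le) hzu0, mul_nonpos_of_nonneg_of_nonpos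
      (mul_nonneg hρ.le ht.le) hfoc, mul_pos hρ (pow_pos ht 2)]
  · have hfz := hfed z hzu0.le p hp
    rw [real_inner_self_eq_norm_sq] at hfz
    have hz0 : 0 < ‖z‖ := norm_pos_iff.2 fun h => by simp [h] at hzu0
    have hz : ‖z‖ < 3 * ρ / 4 := by
      have hqa : dist (a - t • u) a = t := by
        rw [dist_eq_norm, sub_sub_cancel_left, norm_neg, norm_smul, hu, mul_one,
          Real.norm_of_nonneg ht.le]
      have := dist_triangle4 p x (a - t • u) a
      rw [← dist_eq_norm, dist_comm p x, hqa] at *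
      linarith
    nlinarith [mul_lt_mul_of_pos_right hz (pow_pos hz0 2)]

theorem segment_sub_smul_eq_image {a u : E} {r : ℝ} (hr : 0 ≤ r) :
    segment ℝ a (a - r • u) = (fun t : ℝ => a - t • u) '' Icc 0 r := by
  have hIcc : Icc (0 : ℝ) r = (r * ·) '' Icc 0 1 := by
    rw [image_mul_left_Icc hr zero_le_one, mul_zero, mul_one]
  rw [segment_eq_image', hIcc, image_image]
  exact image_congr fun θ _ => by simp only [mul_smul]; module

theorem union_setOf_sub_smul_eq {A : Set E} {a u : E} (ha : a ∈ A) {r : ℝ} (hr : 0 ≤ r) :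
    A ∪ {x | ∃ t : ℝ, 0 < t ∧ t ≤ r ∧ x = a - t • u} = A ∪ segment ℝ a (a - r • u) := by
  rw [segment_sub_smul_eq_image hr]
  ext x
  simp only [mem_union, mem_ofPred_eq, mem_image, mem_Icc]
  constructor
  · rintro (hx | ⟨t, ht0, htr, rfl⟩)
    · exact Or.inl hx
    · exact Or.inr ⟨t, ⟨ht0.le, htr⟩, rfl⟩
  · rintro (hx | ⟨t, ⟨ht0, htr⟩, rfl⟩)
    · exact Or.inl hx
    · rcases ht0.eq_or_lt with rfl | ht0
      · simpa using Or.inl ha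
      · exact Or.inr ⟨t, ht0, htr, rfl⟩

theorem unpPt_union_segment [ProperSpace E] {A : Set E} (hA : IsClosed A) {a u x : E} {ρ : ℝ}
    (hρ : 0 < ρ) (ha : a ∈ A) (hu : ‖u‖ = 1) (hunp : ∀ b ∈ A, ∀ x, dist x b < ρ → UnpPt A x)
    (hfed : ∀ y, ⟪y, u⟫ ≤ 0 → ∀ b ∈ A, 2 * ρ * ⟪y, b - a⟫ ≤ ‖y‖ * ‖b - a‖ ^ 2)
    (hx : infDist x (A ∪ segment ℝ a (a - (ρ / 4) • u)) < ρ / 4) :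
    UnpPt (A ∪ segment ℝ a (a - (ρ / 4) • u)) x := by
  set Q := segment ℝ a (a - (ρ / 4) • u)
  set d := infDist x (A ∪ Q)
  have hQ : Q = (fun t : ℝ => a - t • u) '' Icc 0 (ρ / 4) :=
    segment_sub_smul_eq_image (by positivity)
  have hmin : ∀ w ∈ Q, d ≤ dist x w := fun w hw => infDist_le_dist_of_mem (Or.inr hw)
  have hAA : ∀ p ∈ A, ∀ q ∈ A, dist x p = d → dist x q = d → p = q := by
    intro p hp q hq hpd hqd
    have hdA : infDist x A = d := le_antisymm (hpd ▸ infDist_le_dist_of_mem hp)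
      (infDist_le_infDist_of_subset subset_union_left ⟨a, ha⟩)
    exact (hunp p hp x (by linarith)).unique ⟨hp, hpd.trans hdA.symm⟩ ⟨hq, hqd.trans hdA.symm⟩
  have hQQ : ∀ p ∈ Q, ∀ q ∈ Q, dist x p = d → dist x q = d → p = q := fun p hp q hq hpd hqd =>
    (convex_segment _ _).eq_of_forall_dist_le hp hq (hpd ▸ hmin) (hqd ▸ hmin)
  have hAQ : ∀ p ∈ A, ∀ q ∈ Q, dist x p = d → dist x q = d → q ∈ A := by
    intro p hp q hq hpd hqd
    have hfoc := (convex_segment _ _).inner_sub_nonpos_of_forall_dist_le hq (hqd ▸ hmin)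
      (left_mem_segment ℝ a _)
    rw [hQ] at hq
    obtain ⟨t, ⟨ht0, htρ⟩, rfl⟩ := hq
    rcases ht0.eq_or_lt with rfl | ht0
    · simpa using ha
    rw [sub_sub_cancel, real_inner_smul_right] at hfoc
    exact absurd (hqd.trans hpd.symm) (dist_sub_smul_lt_dist_of_mem hρ hu hfed hp ht0 htρ
      (hqd ▸ hx) (nonpos_of_mul_nonpos_right hfoc ht0)).ne
  obtain ⟨p₀, hp₀, hd₀⟩ := (hA.union (hQ ▸ isCompact_Icc.image (by fun_prop)).isClosed
    ).exists_infDist_eq_dist ⟨a, Or.inl ha⟩ x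
  refine ⟨p₀, ⟨hp₀, hd₀.symm⟩, fun p ⟨hp, hpd⟩ => ?_⟩
  rcases hp with hp | hp <;> rcases hp₀ with hp₀ | hp₀
  · exact hAA p hp p₀ hp₀ hpd hd₀.symm
  · exact hAA p hp p₀ (hAQ p hp p₀ hp₀ hpd hd₀.symm) hpd hd₀.symm
  · exact hAA p (hAQ p₀ hp₀ p hp hd₀.symm hpd) p₀ hp₀ hpd hd₀.symm
  · exact hQQ p hp p₀ hp₀ hpd hd₀.symm

/-- Attaching a short segment in the direction opposite to a ray tangent cone keeps
positive reach. -/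
theorem stmt5 {d : ℕ} (A : Set (EuclideanSpace ℝ (Fin d))) (ρ : ℝ) (hρ : 0 < ρ)
    (hreach : ENNReal.ofReal ρ < setReach A)
    (a u : EuclideanSpace ℝ (Fin d)) (ha : a ∈ A) (hu : ‖u‖ = 1)
    (htan : Tan A a = {x | ∃ t : ℝ, 0 ≤ t ∧ x = t • u}) :
    ENNReal.ofReal (ρ / 4) ≤
      setReach (A ∪ {x | ∃ t : ℝ, 0 < t ∧ t ≤ ρ / 4 ∧ x = a - t • u}) := by
  have hunp : ∀ b ∈ A, ∀ x, dist x b < ρ → UnpPt A x := fun b hb x =>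
    unpPt_of_lt_setReach hreach hb
  have hA := isClosed_of_lt_setReach hρ hreach
  have hfed : ∀ y, ⟪y, u⟫ ≤ 0 → ∀ b ∈ A, 2 * ρ * ⟪y, b - a⟫ ≤ ‖y‖ * ‖b - a‖ ^ 2 :=
    fun y hy b hb => two_mul_inner_le_of_tan_eq_ray hA ha hb hρ.le (hunp a ha) htan hy
  rw [union_setOf_sub_smul_eq ha (by positivity)]
  exact ofReal_le_setReach fun x hx => unpPt_union_segment hA hρ ha hu hunp hfed hx
end
end

section
/- Let E be a Banach space, L > 0, and ∅ ≠ M ⊆ E × ℝ. Suppose that for each point m = (e, t) ∈ M there exists a functional e*_m ∈ E* with ‖e*_m‖ ≤ L such that t + e*_m(ẽ − e) ≤ t̃ for every (ẽ, t̃) ∈ M. Then there exists a convex L-Lipschitz function g : E → ℝ whose graph contains M. -/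
/-!
Choose for every `m = (e, t) ∈ M` a supporting functional `f_m` and let `g` be the upper envelope
of the affine minorants `x ↦ t + f_m (x - e)`. Each of them is convex and `L`-Lipschitz, and the
support condition says that all of them lie below `t'` at every `(e', t') ∈ M`; so the envelope is
finite, convex and `L`-Lipschitz, equals `t'` at `e'` (the minorant of `(e', t')` itself attains it).
-/

open Set

noncomputable section

section Envelope

variable {ι : Type*}

theorem ConvexOn.ciSup [Nonempty ι] {𝕜 E : Type*} [Semiring 𝕜] [PartialOrder 𝕜] [AddCommMonoid E] [SMul 𝕜 E]
    [Module 𝕜 ℝ] [PosSMulMono 𝕜 ℝ] {s : Set E} {f : ι → E → ℝ} (hs : Convex 𝕜 s)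
    (hf : ∀ i, ConvexOn 𝕜 s (f i)) (hbdd : ∀ x ∈ s, BddAbove (range fun i => f i x)) :
    ConvexOn 𝕜 s fun x => ⨆ i, f i x := by
  refine ⟨hs, fun x hx y hy a b ha hb hab => ciSup_le fun i => ?_⟩
  calc f i (a • x + b • y) ≤ a • f i x + b • f i y := (hf i).2 hx hy ha hb hab
    _ ≤ a • (⨆ i, f i x) + b • ⨆ i, f i y :=
      add_le_add (smul_le_smul_of_nonneg_left (le_ciSup (hbdd x hx) i) ha)
        (smul_le_smul_of_nonneg_left (le_ciSup (hbdd y hy) i) hb)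

variable {α : Type*} [PseudoMetricSpace α] {K : NNReal} {f : ι → α → ℝ}

theorem LipschitzWith.bddAbove_range_apply (hf : ∀ i, LipschitzWith K (f i)) {x₀ : α}
    (h₀ : BddAbove (range fun i => f i x₀)) (x : α) : BddAbove (range fun i => f i x) := by
  obtain ⟨C, hC⟩ := h₀
  refine ⟨C + K * dist x x₀, forall_mem_range.2 fun i => ?_⟩
  linarith [(hf i).le_add_mul x x₀, hC (mem_range_self i)]

theorem LipschitzWith.ciSup [Nonempty ι] (hf : ∀ i, LipschitzWith K (f i))
    (hbdd : ∀ x, BddAbove (range fun i => f i x)) : LipschitzWith K fun x => ⨆ i, f i x :=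
  LipschitzWith.of_le_add_mul K fun x y => ciSup_le fun i =>
    ((hf i).le_add_mul x y).trans (by gcongr; exact le_ciSup (hbdd y) i)

end Envelope

section AffineMinorant

variable {E : Type*} [NormedAddCommGroup E] [NormedSpace ℝ E] (f : E →L[ℝ] ℝ) (e : E) (t : ℝ)

theorem ContinuousLinearMap.convexOn_const_add_apply_sub :
    ConvexOn ℝ univ fun x => t + f (x - e) :=
  (((f : E →ₗ[ℝ] ℝ).convexOn convex_univ).add_const (t - f e)).congr fun x _ => by
    simp only [Pi.add_apply, ContinuousLinearMap.coe_coe, map_sub]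
    ring

theorem ContinuousLinearMap.lipschitzWith_const_add_apply_sub :
    LipschitzWith ‖f‖₊ fun x => t + f (x - e) := by
  refine LipschitzWith.of_le_add_mul _ fun x y => ?_
  have hle : f (x - y) ≤ ‖f‖ * ‖x - y‖ := (le_abs_self _).trans (f.le_opNorm (x - y))
  rw [map_sub] at hle
  rw [dist_eq_norm, coe_nnnorm, map_sub, map_sub]
  linarith

end AffineMinorant

theorem stmt6_general {E : Type*} [NormedAddCommGroup E] [NormedSpace ℝ E]
    (L : ℝ) (M : Set (E × ℝ)) (hM : M.Nonempty)
    (h : ∀ m ∈ M, ∃ f : E →L[ℝ] ℝ, ‖f‖ ≤ L ∧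
      ∀ m' ∈ M, m.2 + f (m'.1 - m.1) ≤ m'.2) :
    ∃ g : E → ℝ, ConvexOn ℝ univ g ∧ LipschitzWith (Real.toNNReal L) g ∧
      ∀ m ∈ M, g m.1 = m.2 := by
  choose! F hFnorm hFsupp using h
  obtain ⟨m₀, hm₀⟩ := hM
  set minorant : M → E → ℝ := fun m x => (m : E × ℝ).2 + F m (x - (m : E × ℝ).1)
  have hlip : ∀ m, LipschitzWith L.toNNReal (minorant m) := fun m =>
    ((F m).lipschitzWith_const_add_apply_sub _ _).weaken <| by
      simpa using Real.toNNReal_le_toNNReal (hFnorm m m.2)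
  have hsupport : ∀ m m' : M, minorant m (m' : E × ℝ).1 ≤ (m' : E × ℝ).2 := fun m m' =>
    hFsupp m m.2 m' m'.2
  have hbdd := LipschitzWith.bddAbove_range_apply hlip
    ⟨_, forall_mem_range.2 (hsupport · ⟨m₀, hm₀⟩)⟩
  have : Nonempty M := ⟨⟨m₀, hm₀⟩⟩
  refine ⟨fun x => ⨆ m, minorant m x,
    ConvexOn.ciSup convex_univ (fun m => (F m).convexOn_const_add_apply_sub _ _) fun x _ => hbdd x,
    LipschitzWith.ciSup hlip hbdd, fun m hm => ?_⟩
  refine le_antisymm (ciSup_le (hsupport · ⟨m, hm⟩)) ?_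
  simpa [minorant] using le_ciSup (hbdd m.1) ⟨m, hm⟩

/-- If every point of M ⊆ E × ℝ admits a uniformly bounded affine minorant supporting M,
then M lies on the graph of a convex L-Lipschitz function. -/
theorem stmt6 {E : Type*} [NormedAddCommGroup E] [NormedSpace ℝ E] [CompleteSpace E]
    (L : ℝ) (hL : 0 < L) (M : Set (E × ℝ)) (hM : M.Nonempty)
    (h : ∀ m ∈ M, ∃ f : E →L[ℝ] ℝ, ‖f‖ ≤ L ∧
      ∀ m' ∈ M, m.2 + f (m'.1 - m.1) ≤ m'.2) :
    ∃ g : E → ℝ, ConvexOn ℝ univ g ∧ LipschitzWith (Real.toNNReal L) g ∧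
      ∀ m ∈ M, g m.1 = m.2 :=
  stmt6_general L M hM h
end
end

section
/- Let W, V be finite-dimensional Hilbert spaces, U = B(a, r) a ball in W, and φ : U → V a map such that there exist c > 0 and, for each x ∈ U, a linear map g^x : W → V with |φ(y) − (φ(x) + g^x(y − x))| ≤ c|y − x|² for all x, y ∈ U. Then φ is differentiable on U with derivative φ'(x) = g^x, and φ' : U → L(W, V) is Lipschitz with constant m·c for some absolute constant m (independent of W, V, U, φ). -/
open Set Metric

noncomputable section

/-! Subtracting the approximation property at `x` and at `y`, both evaluated at a point `z`
with `‖z - x‖ = ‖x - y‖`, and once more at the pair `(y, x)`, bounds `(g x - g y) (z - x)` by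
`6 c ‖x - y‖²`; taking `z - x` in every direction gives `‖g x - g y‖ ≤ 6 c ‖x - y‖` as long as
the sphere of radius `‖x - y‖` around `x` stays in the ball. For distant points one chains this
local bound along the segment `[x, y]`, which keeps a uniform distance from the boundary.
Differentiability is immediate, the remainder being `O(‖y - x‖²)`. -/

open Asymptotics Filter Topology

theorem dist_le_mul_dist_of_local_bound_on_segment {E X : Type*} [SeminormedAddCommGroup E]
    [NormedSpace ℝ E] [PseudoMetricSpace X] {f : E → X} {x y : E} {K δ : ℝ} (hδ : 0 < δ)
    (hf : ∀ u ∈ segment ℝ x y, ∀ v ∈ segment ℝ x y, dist u v < δ →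
      dist (f u) (f v) ≤ K * dist u v) :
    dist (f x) (f y) ≤ K * dist x y := by
  obtain ⟨n, hn⟩ := exists_nat_gt (dist x y / δ)
  have hn0 : (0 : ℝ) < n := (div_nonneg dist_nonneg hδ.le).trans_lt hn
  set p : ℕ → E := fun i ↦ AffineMap.lineMap x y ((i : ℝ) / n)
  have hp : ∀ i ≤ n, p i ∈ segment ℝ x y := fun i hi ↦ by
    rw [segment_eq_image_lineMap]
    exact mem_image_of_mem _ ⟨by positivity, div_le_one_of_le₀ (by exact_mod_cast hi) hn0.le⟩
  have hstep : ∀ i, dist (p i) (p (i + 1)) = dist x y / n := fun i ↦ by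
    simp only [p, dist_lineMap_lineMap, Real.dist_eq]
    rw [Nat.cast_succ, add_div, sub_add_cancel_left, abs_neg, abs_of_pos (by positivity)]
    ring
  calc dist (f x) (f y) = dist (f (p 0)) (f (p n)) := by simp [p, hn0.ne']
    _ ≤ ∑ _i ∈ Finset.range n, K * (dist x y / n) := by
      refine dist_le_range_sum_of_dist_le (f := fun i ↦ f (p i)) n fun {i} hi ↦ ?_
      rw [← hstep i]
      refine hf _ (hp i hi.le) _ (hp (i + 1) hi) ?_
      rw [hstep, div_lt_iff₀ hn0]
      rwa [div_lt_iff₀ hδ, mul_comm] at hn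
    _ = K * dist x y := by
      rw [Finset.sum_const, Finset.card_range, nsmul_eq_mul]
      field_simp

variable {E F : Type*} [NormedAddCommGroup E] [NormedSpace ℝ E]
  [NormedAddCommGroup F] [NormedSpace ℝ F]

def IsQuadraticApproxOn (φ : E → F) (g : E → E →L[ℝ] F) (c : ℝ) (s : Set E) : Prop :=
  ∀ x ∈ s, ∀ y ∈ s, ‖φ y - (φ x + g x (y - x))‖ ≤ c * ‖y - x‖ ^ 2

namespace IsQuadraticApproxOn

variable {φ : E → F} {g : E → E →L[ℝ] F} {c : ℝ} {s : Set E}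

theorem hasFDerivAt (h : IsQuadraticApproxOn φ g c s) {x : E} (hs : s ∈ 𝓝 x) :
    HasFDerivAt φ (g x) x := by
  have hx : x ∈ s := mem_of_mem_nhds hs
  have hrem : (fun y ↦ φ y - (φ x + g x (y - x))) =O[𝓝 x] fun y ↦ ‖y - x‖ ^ 2 :=
    IsBigO.of_bound c <| eventually_of_mem hs fun y hy ↦ by
      simpa only [norm_pow, norm_norm] using h x hx y hy
  have hlin : HasFDerivAt (fun y ↦ φ x + g x (y - x)) (g x) x :=
    ((g x).hasFDerivAt.comp x (hasFDerivAt_sub_const x)).const_add (φ x)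
  simpa only [zero_add, Pi.add_def, sub_add_cancel] using (hrem.hasFDerivAt one_lt_two).add hlin

theorem norm_apply_le (h : IsQuadraticApproxOn φ g c s) (hc : 0 ≤ c) {x y v : E} (hx : x ∈ s)
    (hy : y ∈ s) (hv : x + v ∈ s) (hvxy : ‖v‖ ≤ ‖x - y‖) :
    ‖(g x - g y) v‖ ≤ 6 * c * ‖x - y‖ ^ 2 := by
  set z := x + v
  have hzy : ‖z - y‖ ≤ 2 * ‖x - y‖ := calc
    ‖z - y‖ = ‖v + (x - y)‖ := by simp only [z]; congr 1; abel
    _ ≤ ‖v‖ + ‖x - y‖ := norm_add_le _ _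
    _ ≤ 2 * ‖x - y‖ := by linarith
  have hyz := h y hy z hv
  have hxz := h x hx z hv
  have hyx := h y hy x hx
  rw [show z - x = v by simp [z]] at hxz
  have hsplit : (g x - g y) v = (φ z - (φ y + g y (z - y))) - (φ z - (φ x + g x v))
      - (φ x - (φ y + g y (x - y))) := by
    simp only [z, sub_apply, map_sub, map_add]
    abel
  calc ‖(g x - g y) v‖
      ≤ ‖φ z - (φ y + g y (z - y))‖ + ‖φ z - (φ x + g x v)‖ + ‖φ x - (φ y + g y (x - y))‖ := by
        rw [hsplit]
        refine (norm_sub_le _ _).trans ?_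
        gcongr
        exact norm_sub_le _ _
    _ ≤ c * (2 * ‖x - y‖) ^ 2 + c * ‖x - y‖ ^ 2 + c * ‖x - y‖ ^ 2 := by
        gcongr
        · exact hyz.trans (by gcongr)
        · exact hxz.trans (by gcongr)
    _ = 6 * c * ‖x - y‖ ^ 2 := by ring

theorem norm_sub_le (h : IsQuadraticApproxOn φ g c s) (hc : 0 ≤ c) {x y : E} (hx : x ∈ s)
    (hy : y ∈ s) (hxy : closedBall x ‖x - y‖ ⊆ s) :
    ‖g x - g y‖ ≤ 6 * c * ‖x - y‖ := by
  rcases eq_or_ne x y with rfl | hne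
  · simp
  have hd : 0 < ‖x - y‖ := norm_pos_iff.2 (sub_ne_zero.2 hne)
  refine ContinuousLinearMap.opNorm_le_of_unit_norm (by positivity) fun u hu ↦ ?_
  have hmem : x + ‖x - y‖ • u ∈ s := hxy <| by
    simp [norm_smul, hu]
  have := h.norm_apply_le hc hx hy hmem (by simp [norm_smul, hu])
  rw [map_smul, norm_smul, Real.norm_of_nonneg hd.le] at this
  nlinarith

theorem norm_sub_le_of_ball {a : E} {r : ℝ} (h : IsQuadraticApproxOn φ g c (ball a r))
    (hc : 0 ≤ c) {x y : E} (hx : x ∈ ball a r) (hy : y ∈ ball a r) :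
    ‖g x - g y‖ ≤ 6 * c * ‖x - y‖ := by
  set μ := min (r - dist x a) (r - dist y a)
  have hμ : 0 < μ := lt_min (sub_pos.2 hx) (sub_pos.2 hy)
  have hseg : segment ℝ x y ⊆ closedBall a (r - μ) :=
    (convex_closedBall a _).segment_subset
      (mem_closedBall.2 (by linarith [min_le_left (r - dist x a) (r - dist y a)]))
      (mem_closedBall.2 (by linarith [min_le_right (r - dist x a) (r - dist y a)]))
  have hsub : closedBall a (r - μ) ⊆ ball a r := closedBall_subset_ball (by linarith)
  simp only [← dist_eq_norm]
  refine dist_le_mul_dist_of_local_bound_on_segment hμ fun u hu v hv huv ↦ ?_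
  simp only [dist_eq_norm] at huv ⊢
  refine h.norm_sub_le hc (hsub (hseg hu)) (hsub (hseg hv)) fun z hz ↦ mem_ball.2 ?_
  have hua := mem_closedBall.1 (hseg hu)
  linarith [mem_closedBall.1 hz, dist_triangle z u a]

end IsQuadraticApproxOn

/-- Converse Taylor theorem: a uniform first-order quadratic approximation property on a
ball implies differentiability, with derivative Lipschitz of constant m·c for an absolute
constant m. -/
theorem stmt12 : ∃ m : ℝ, 0 < m ∧
    ∀ (W V : Type) [NormedAddCommGroup W] [InnerProductSpace ℝ W]
      [FiniteDimensional ℝ W] [NormedAddCommGroup V] [InnerProductSpace ℝ V]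
      [FiniteDimensional ℝ V]
      (a : W) (r c : ℝ) (φ : W → V) (g : W → (W →L[ℝ] V)),
      0 < c →
      (∀ x ∈ ball a r, ∀ y ∈ ball a r, ‖φ y - (φ x + g x (y - x))‖ ≤ c * ‖y - x‖ ^ 2) →
      (∀ x ∈ ball a r, HasFDerivAt φ (g x) x) ∧
        ∀ x ∈ ball a r, ∀ y ∈ ball a r, ‖g x - g y‖ ≤ m * c * ‖x - y‖ := by
  refine ⟨6, by norm_num, fun W V _ _ _ _ _ _ a r c φ g hc h ↦ ?_⟩
  have h : IsQuadraticApproxOn φ g c (ball a r) := h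
  exact ⟨fun x hx ↦ h.hasFDerivAt (isOpen_ball.mem_nhds hx),
    fun x hx y hy ↦ h.norm_sub_le_of_ball hc.le hx hy⟩
end
end

section
/- Let ψ : I → ℝ^d be an injective C¹ map on an interval I with λ := inf{|ψ'(x)| : x ∈ I} > 0 and with ψ' M-Lipschitz. Then any arc-length reparametrization of ψ has (2M/λ²)-Lipschitz derivative; in particular, ψ(I) is a simple C^{1,1} curve with parameter 2M/λ². -/
/-!
Extend the speed `‖ψ'‖` from `I` to a Lipschitz function `f ≥ λ` on all of `ℝ`. Its primitive
`σ` has derivative at least `λ`, so it is an order isomorphism of `ℝ` whose inverse `τ` is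
`λ⁻¹`-Lipschitz, and `γ = ψ ∘ τ` on `τ⁻¹(I)` has unit speed with `γ' = ψ' ∘ τ / ‖ψ' ∘ τ‖`.
Normalization `v ↦ v / ‖v‖` is `2/λ`-Lipschitz on `{‖v‖ ≥ λ}`, so `γ'` is Lipschitz with
constant `(2/λ) · M · λ⁻¹ = 2M/λ²`.
-/

open Set Filter NNReal

lemma norm_inv_smul_sub_inv_smul_le {E : Type*} [NormedAddCommGroup E] [NormedSpace ℝ E]
    {a b : E} {c : ℝ} (hc : 0 < c) (ha : c ≤ ‖a‖) (hb : c ≤ ‖b‖) :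
    ‖‖a‖⁻¹ • a - ‖b‖⁻¹ • b‖ ≤ 2 / c * ‖a - b‖ := by
  have hA : 0 < ‖a‖ := hc.trans_le ha
  have hB : 0 < ‖b‖ := hc.trans_le hb
  have hsplit : ‖a‖⁻¹ • a - ‖b‖⁻¹ • b = ‖a‖⁻¹ • (a - b) + ((‖b‖ - ‖a‖) / (‖a‖ * ‖b‖)) • b := by
    have hcoef : (‖b‖ - ‖a‖) / (‖a‖ * ‖b‖) = ‖a‖⁻¹ - ‖b‖⁻¹ := by field_simp
    rw [hcoef]
    module
  have h1 : ‖‖a‖⁻¹ • (a - b)‖ ≤ ‖a - b‖ / c := by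
    rw [norm_smul, norm_inv, norm_norm, inv_mul_eq_div]
    gcongr
  have h2 : ‖((‖b‖ - ‖a‖) / (‖a‖ * ‖b‖)) • b‖ ≤ ‖a - b‖ / c := by
    rw [norm_smul, Real.norm_eq_abs, abs_div, abs_of_pos (mul_pos hA hB), div_mul_eq_mul_div,
      mul_div_mul_right _ _ hB.ne', abs_sub_comm]
    gcongr
    exact abs_norm_sub_norm_le a b
  calc _ ≤ ‖a - b‖ / c + ‖a - b‖ / c := by
        rw [hsplit]
        exact (norm_add_le _ _).trans (add_le_add h1 h2)
    _ = 2 / c * ‖a - b‖ := by ring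

lemma lipschitzOnWith_inv_norm_smul {E : Type*} [NormedAddCommGroup E] [NormedSpace ℝ E]
    {c : ℝ≥0} (hc : 0 < c) :
    LipschitzOnWith (2 / c) (fun v : E => ‖v‖⁻¹ • v) {v | c ≤ ‖v‖} := by
  refine LipschitzOnWith.of_dist_le_mul fun a ha b hb => ?_
  rw [dist_eq_norm, dist_eq_norm, NNReal.coe_div, NNReal.coe_ofNat]
  exact norm_inv_smul_sub_inv_smul_le (NNReal.coe_pos.2 hc) ha hb

lemma surjective_of_mul_sub_le_sub {σ : ℝ → ℝ} (hσ : Continuous σ) {c : ℝ} (hc : 0 < c)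
    (h : ∀ ⦃x y⦄, x ≤ y → c * (y - x) ≤ σ y - σ x) : Function.Surjective σ := by
  refine hσ.surjective ?_ ?_
  · refine tendsto_atTop_mono' _ ?_ (tendsto_atTop_add_const_left _ (σ 0)
      (tendsto_id.const_mul_atTop hc))
    filter_upwards [eventually_ge_atTop 0] with t ht
    show σ 0 + c * t ≤ σ t
    linarith [h ht]
  · refine tendsto_atBot_mono' _ ?_ (tendsto_atBot_add_const_left _ (σ 0)
      (tendsto_id.const_mul_atBot hc))
    filter_upwards [eventually_le_atBot 0] with t ht
    show σ t ≤ σ 0 + c * t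
    linarith [h ht]

lemma antilipschitzWith_of_mul_sub_le_sub {σ : ℝ → ℝ} {c : ℝ≥0} (hc : 0 < c)
    (h : ∀ ⦃x y⦄, x ≤ y → c * (y - x) ≤ σ y - σ x) : AntilipschitzWith c⁻¹ σ := by
  refine AntilipschitzWith.of_le_mul_dist fun x y => ?_
  wlog hxy : x ≤ y generalizing x y
  · rw [dist_comm, dist_comm (σ x)]
    exact this y x (le_of_not_ge hxy)
  have hσxy := (mul_nonneg c.coe_nonneg (sub_nonneg.2 hxy)).trans (h hxy)
  rw [NNReal.coe_inv, Real.dist_eq, Real.dist_eq, abs_sub_comm, abs_sub_comm (σ x),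
    abs_of_nonneg (sub_nonneg.2 hxy), abs_of_nonneg hσxy, inv_mul_eq_div,
    le_div_iff₀ (NNReal.coe_pos.2 hc), mul_comm]
  exact h hxy

theorem exists_orderIso_hasDerivAt_inv_comp {σ f : ℝ → ℝ} {c : ℝ≥0} (hc : 0 < c)
    (hσ : ∀ x, HasDerivAt σ (f x) x) (hf : ∀ x, c ≤ f x) :
    ∃ τ : ℝ ≃o ℝ, (∀ s, HasDerivAt τ (f (τ s))⁻¹ s) ∧ LipschitzWith c⁻¹ τ := by
  have hσ_diff : Differentiable ℝ σ := fun x => (hσ x).differentiableAt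
  have hgap : ∀ ⦃x y⦄, x ≤ y → c * (y - x) ≤ σ y - σ x :=
    mul_sub_le_image_sub_of_le_deriv hσ_diff fun x => (hσ x).deriv ▸ hf x
  have hc' : (0 : ℝ) < c := NNReal.coe_pos.2 hc
  have hmono : StrictMono σ := fun x y hxy => by nlinarith [hgap hxy.le]
  set e := hmono.orderIsoOfSurjective σ (surjective_of_mul_sub_le_sub hσ_diff.continuous hc' hgap)
  refine ⟨e.symm, fun s => ?_, ?_⟩
  · exact (hσ _).of_local_left_inverse e.symm.continuous.continuousAt
      (hc'.trans_le (hf _)).ne' (Eventually.of_forall e.apply_symm_apply)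
  · exact (antilipschitzWith_of_mul_sub_le_sub hc hgap).to_rightInverse e.apply_symm_apply

lemma LipschitzOnWith.extend_real_of_forall_le {α : Type*} [PseudoMetricSpace α]
    {g : α → ℝ} {s : Set α} {K : ℝ≥0} (hg : LipschitzOnWith K g s) {c : ℝ}
    (hc : ∀ x ∈ s, c ≤ g x) : ∃ f : α → ℝ, LipschitzWith K f ∧ EqOn g f s ∧ ∀ x, c ≤ f x := by
  obtain ⟨f, hf, hfg⟩ := hg.extend_real
  exact ⟨fun x => max (f x) c, hf.max_const c,
    fun x hx => by simp [← hfg hx, hc x hx], fun x => le_max_right _ _⟩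

theorem stmt17_general {d : ℕ} (I : Set ℝ) (hI : I.OrdConnected)
    (ψ ψ' : ℝ → EuclideanSpace ℝ (Fin d)) (lam M : ℝ) (hlam : 0 < lam)
    (hderiv : ∀ t ∈ I, HasDerivWithinAt ψ (ψ' t) I t)
    (hlow : ∀ t ∈ I, lam ≤ ‖ψ' t‖)
    (hlip : LipschitzOnWith (Real.toNNReal M) ψ' I)
    (hinj : InjOn ψ I) :
    ∃ (J : Set ℝ) (γ γ' : ℝ → EuclideanSpace ℝ (Fin d)),
      J.OrdConnected ∧ InjOn γ J ∧ γ '' J = ψ '' I ∧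
      (∀ t ∈ J, HasDerivWithinAt γ (γ' t) J t ∧ ‖γ' t‖ = 1) ∧
      LipschitzOnWith (Real.toNNReal (2 * M / lam ^ 2)) γ' J := by
  lift lam to ℝ≥0 using hlam.le
  replace hlam : 0 < lam := mod_cast hlam
  obtain ⟨f, hf, hf_eq, hf_ge⟩ :=
    (lipschitzWith_one_norm.comp_lipschitzOnWith hlip).extend_real_of_forall_le hlow
  obtain ⟨τ, hτ_deriv, hτ_lip⟩ := exists_orderIso_hasDerivAt_inv_comp hlam
    (fun t => (hf.continuous.integral_hasStrictDerivAt 0 t).hasDerivAt) hf_ge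
  have hmaps : MapsTo τ (τ ⁻¹' I) I := mapsTo_preimage τ I
  refine ⟨τ ⁻¹' I, ψ ∘ τ, fun s => ‖ψ' (τ s)‖⁻¹ • ψ' (τ s), hI.preimage_mono τ.monotone,
    hinj.comp τ.injective.injOn hmaps, by rw [image_comp, image_preimage_eq I τ.surjective],
    fun s hs => ⟨?_, norm_smul_inv_norm ?_⟩, ?_⟩
  · have hγ := (hderiv _ hs).scomp s (hτ_deriv s).hasDerivWithinAt hmaps
    rwa [← hf_eq hs] at hγ
  · exact norm_pos_iff.1 ((NNReal.coe_pos.2 hlam).trans_le (hlow _ hs))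
  · refine (((lipschitzOnWith_inv_norm_smul hlam).comp hlip hlow).comp hτ_lip.lipschitzOnWith
      hmaps).weaken ?_
    rw [← NNReal.coe_le_coe]
    push_cast [Real.coe_toNNReal']
    have hconst : 2 / lam * max M 0 * (lam : ℝ)⁻¹ = 2 / (lam : ℝ) ^ 2 * max M 0 := by field_simp
    rw [hconst, mul_max_of_nonneg _ _ (by positivity), mul_zero, div_mul_eq_mul_div]

/-- A regular injective C¹ curve with M-Lipschitz derivative and speed bounded below by
λ > 0 is a simple C^{1,1} curve with parameter 2M/λ². -/
theorem stmt17 {d : ℕ} (I : Set ℝ) (hI : I.OrdConnected)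
    (ψ ψ' : ℝ → EuclideanSpace ℝ (Fin d)) (lam M : ℝ) (hlam : 0 < lam) (hM : 0 < M)
    (hderiv : ∀ t ∈ I, HasDerivWithinAt ψ (ψ' t) I t)
    (hcont : ContinuousOn ψ' I)
    (hlow : ∀ t ∈ I, lam ≤ ‖ψ' t‖)
    (hlip : LipschitzOnWith (Real.toNNReal M) ψ' I)
    (hinj : InjOn ψ I) :
    ∃ (J : Set ℝ) (γ γ' : ℝ → EuclideanSpace ℝ (Fin d)),
      J.OrdConnected ∧ InjOn γ J ∧ γ '' J = ψ '' I ∧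
      (∀ t ∈ J, HasDerivWithinAt γ (γ' t) J t ∧ ‖γ' t‖ = 1) ∧
      LipschitzOnWith (Real.toNNReal (2 * M / lam ^ 2)) γ' J :=
  stmt17_general I hI ψ ψ' lam M hlam hderiv hlow hlip hinj
end
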